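/- arXiv:1001.0544 — 7 statements merged into one kernel-verified Lean document; each statement's English description precedes it below -/
import Mathlib

section
/- Let F be a field with a Krull valuation v, and let E be a field extension of F. Then there exists a valuation w on E extending v (i.e., whose valuation ring intersected with F is the valuation ring of v). -/
/-- **Extension of Krull valuations.**
Let `F` be a field with a Krull valuation `v` (encoded by its valuation ring,
i.e. a `ValuationSubring` of `F`), and let `E` be a field extension of `F`.
Then there exists a valuation `w` on `E` (again encoded by its valuation ring)
extending `v`, i.e. whose valuation ring pulls back to the valuation ring of `v`:
`o_w ∩ F = o_v`. -/
theorem exists_valuationSubring_extension (F E : Type*) [Field F] [Field E] [Algebra F E]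
    (v : ValuationSubring F) :
    ∃ w : ValuationSubring E, ∀ x : F, algebraMap F E x ∈ w ↔ x ∈ v := by
  obtain ⟨A, h, hloc⟩ :=
    IsLocalRing.exists_factor_valuationRing ((algebraMap F E).comp v.subtype)
  refine ⟨A, fun x => ⟨fun hx => ?_, fun hx => h ⟨x, hx⟩⟩⟩
  by_contra hxv
  have hx0 : x ≠ 0 := fun h0 => hxv (h0 ▸ v.zero_mem)
  have hxi : x⁻¹ ∈ v := (v.mem_or_inv_mem x).resolve_left hxv
  -- x⁻¹ is a nonunit in v
  have hnon : ¬ IsUnit (⟨x⁻¹, hxi⟩ : v) := by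
    intro hu
    obtain ⟨y, hy⟩ := isUnit_iff_exists_inv.mp hu
    have : (x⁻¹ : F) * (y : F) = 1 := congrArg Subtype.val hy
    have hyx : (y : F) = x := by field_simp at this; simpa using this
    exact hxv (hyx ▸ y.2)
  -- but its image in A is a unit
  have him : IsUnit ((((algebraMap F E).comp v.subtype).codRestrict A.toSubring h)
      ⟨x⁻¹, hxi⟩) := by
    refine isUnit_iff_exists_inv.mpr ⟨⟨algebraMap F E x, hx⟩, ?_⟩
    ext
    show algebraMap F E (v.subtype ⟨x⁻¹, hxi⟩) * algebraMap F E x = 1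
    rw [← map_mul]
    show algebraMap F E (x⁻¹ * x) = 1
    rw [inv_mul_cancel₀ hx0, map_one]
  exact hnon (hloc.1 _ him)
end

section
/- Let (R, Δ_R) be a nondegenerate differential local ring that is x_i-adically complete for some member x_i of a regular sequence of parameters with associated commuting derivations ∂_1,…,∂_n of rational type. Then for every integer e, the operator x_i ∂_i acts on x_i^e R / x_i^{e+1} R by multiplication by e, and x_i ∂_i acts bijectively on x_i R. -/
set_option linter.unusedSectionVars false
set_option maxHeartbeats 1000000

section AuxDiff
variable {R : Type} [CommRing R] [Algebra ℚ R]

lemma xd_pow (d : Derivation ℚ R R) (x : R) (hx : d x = 1) (k : ℕ) :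
    x * d (x ^ k) = (k : R) * x ^ k := by
  induction k with
  | zero => simp
  | succ k ih =>
    rw [pow_succ, Derivation.leibniz, smul_eq_mul, smul_eq_mul, hx]
    push_cast
    linear_combination x * ih
end AuxDiff

section AuxDiff2
variable {R : Type} [CommRing R] [Algebra ℚ R]

lemma mem_step (d : Derivation ℚ R R) (x : R) (hx : d x = 1) {k : ℕ} {c : R}
    (hc : c ∈ Ideal.span {x ^ k}) :
    ∃ t, c = x ^ k * t ∧ x * d c = (k : R) * c + x ^ (k + 1) * d t := by
  obtain ⟨t, ht⟩ := Ideal.mem_span_singleton.mp hc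
  refine ⟨t, ht, ?_⟩
  subst ht
  rw [Derivation.leibniz, smul_eq_mul, smul_eq_mul]
  linear_combination t * xd_pow d x hx k

lemma cancel_nat {k : ℕ} (hk : k ≠ 0) {c : R} {J : Ideal R}
    (h : (k : R) * c ∈ J) : c ∈ J := by
  have hk' : (k : ℚ) ≠ 0 := Nat.cast_ne_zero.mpr hk
  have : c = algebraMap ℚ R (k : ℚ)⁻¹ * ((k : R) * c) := by
    rw [← mul_assoc, show ((k : ℕ) : R) = algebraMap ℚ R (k : ℚ) by simp, ← map_mul,
      inv_mul_cancel₀ hk', map_one, one_mul]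
  rw [this]
  exact J.mul_mem_left _ h

lemma mem_all_pow_eq_zero (x : R) (H : IsHausdorff (Ideal.span {x}) R) {c : R}
    (h : ∀ k, c ∈ Ideal.span {x ^ k}) : c = 0 := by
  apply H.haus
  intro n
  refine SModEq.zero.mpr ?_
  have : (Ideal.span {x} ^ n • ⊤ : Submodule R R) = Ideal.span {x ^ n} := by
    simp [Ideal.span_singleton_pow]
  rw [this]
  exact h n

lemma pow_mul_mem (x : R) (k : ℕ) (t : R) : x ^ k * t ∈ Ideal.span {x ^ k} :=
  Ideal.mem_span_singleton.mpr ⟨t, rfl⟩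

lemma x_regular (d : Derivation ℚ R R) (x : R) (hx : d x = 1)
    (H : IsHausdorff (Ideal.span {x}) R) {c : R} (hc : x * c = 0) : c = 0 := by
  apply mem_all_pow_eq_zero x H
  intro k
  induction k with
  | zero => simp [Ideal.span_singleton_one]
  | succ k ih =>
    obtain ⟨t, ht, hd⟩ := mem_step d x hx ih
    have h0 : d (x * c) = 0 := by rw [hc, map_zero]
    rw [Derivation.leibniz, smul_eq_mul, smul_eq_mul, hx, mul_one] at h0
    have key : ((k + 1 : ℕ) : R) * c = -(x ^ (k + 1) * d t) := by
      push_cast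
      linear_combination h0 - hd
    refine cancel_nat (k := k + 1) (Nat.succ_ne_zero k) ?_
    rw [key]
    exact neg_mem (pow_mul_mem x (k + 1) (d t))

lemma dc_zero (d : Derivation ℚ R R) (x : R) (hx : d x = 1)
    (H : IsHausdorff (Ideal.span {x}) R) {c : R} (hc1 : c ∈ Ideal.span {x})
    (hdc : d c = 0) : c = 0 := by
  apply mem_all_pow_eq_zero x H
  intro k
  induction k with
  | zero => simp [Ideal.span_singleton_one]
  | succ k ih =>
    match k, ih with
    | 0, _ => simpa [pow_one] using hc1
    | (k + 1), ih =>
      obtain ⟨t, ht, hd⟩ := mem_step d x hx ih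
      rw [hdc, mul_zero] at hd
      have key : ((k + 1 : ℕ) : R) * c = -(x ^ (k + 1 + 1) * d t) := by
        push_cast at hd ⊢
        linear_combination -hd
      refine cancel_nat (k := k + 1) (Nat.succ_ne_zero k) ?_
      rw [key]
      exact neg_mem (pow_mul_mem x (k + 2) (d t))

lemma xd_mem (d : Derivation ℚ R R) (x : R) (hx : d x = 1) {k : ℕ} {c : R}
    (hc : c ∈ Ideal.span {x ^ k}) : x * d c ∈ Ideal.span {x ^ k} := by
  obtain ⟨t, ht, hd⟩ := mem_step d x hx hc
  rw [hd]
  refine add_mem (Ideal.mul_mem_left _ _ hc) ?_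
  exact Ideal.mem_span_singleton.mpr ⟨x * d t, by ring⟩

end AuxDiff2
section Aux4
variable {R : Type} [CommRing R] [Algebra ℚ R]


lemma exists_div_pow (x v : R) (k : ℕ) : ∃ c, v ∈ Ideal.span {x ^ k} → v = x ^ k * c := by
  by_cases h : v ∈ Ideal.span {x ^ k}
  · obtain ⟨c, hc⟩ := Ideal.mem_span_singleton.mp h
    exact ⟨c, fun _ => hc⟩
  · exact ⟨0, fun hh => absurd hh h⟩

noncomputable def approxAux (d : Derivation ℚ R R) (x y : R) : ℕ → R
  | 0 => 0
  | m + 1 =>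
    approxAux d x y m +
      (((m : ℚ) + 1)⁻¹ : ℚ) •
        (x ^ (m + 1) *
          Classical.choose (exists_div_pow x (y - x * d (approxAux d x y m)) (m + 1)))

lemma approxAux_succ (d : Derivation ℚ R R) (x y : R) (m : ℕ) :
    approxAux d x y (m + 1) = approxAux d x y m +
      (((m : ℚ) + 1)⁻¹ : ℚ) •
        (x ^ (m + 1) *
          Classical.choose (exists_div_pow x (y - x * d (approxAux d x y m)) (m + 1))) := rfl

lemma alg_inv_mul (m : ℕ) :
    algebraMap ℚ R (((m : ℚ) + 1)⁻¹) * ((m + 1 : ℕ) : R) = 1 := by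
  rw [show ((m + 1 : ℕ) : R) = algebraMap ℚ R ((m : ℚ) + 1) by push_cast; simp,
    ← map_mul, inv_mul_cancel₀ (by positivity), map_one]

lemma approxAux_inv (d : Derivation ℚ R R) (x : R) (hx : d x = 1) (y : R)
    (hy : y ∈ Ideal.span {x}) (m : ℕ) :
    approxAux d x y m ∈ Ideal.span {x} ∧
      y - x * d (approxAux d x y m) ∈ Ideal.span {x ^ (m + 1)} := by
  induction m with
  | zero =>
    refine ⟨by simp [approxAux], ?_⟩
    show y - x * d (0 : R) ∈ _
    simpa [pow_one] using hy
  | succ m ih =>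
    obtain ⟨ih1, ih2⟩ := ih
    set p := approxAux d x y m with hp
    set c := Classical.choose (exists_div_pow x (y - x * d p) (m + 1)) with hcdef
    have hc : y - x * d p = x ^ (m + 1) * c :=
      Classical.choose_spec (exists_div_pow x (y - x * d p) (m + 1)) ih2
    set α : R := algebraMap ℚ R (((m : ℚ) + 1)⁻¹) with hα
    have hrec : approxAux d x y (m + 1) = p + α * (x ^ (m + 1) * c) := by
      rw [approxAux_succ, Algebra.smul_def]
    have hα1 : α * ((m + 1 : ℕ) : R) = 1 := alg_inv_mul m
    have h1 : x * d (x ^ (m + 1) * c) = ((m + 1 : ℕ) : R) * (x ^ (m + 1) * c) + x ^ (m + 2) * d c := by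
      rw [Derivation.leibniz, smul_eq_mul, smul_eq_mul]
      linear_combination c * xd_pow d x hx (m + 1)
    have hdq : d (α * (x ^ (m + 1) * c)) = α * d (x ^ (m + 1) * c) := by
      rw [hα, ← Algebra.smul_def, d.map_smul, Algebra.smul_def]
    constructor
    · rw [hrec]
      exact add_mem ih1 (Ideal.mem_span_singleton.mpr ⟨α * (x ^ m * c), by ring⟩)
    · have key : y - x * d (approxAux d x y (m + 1)) = -(α * (x ^ (m + 2) * d c)) := by
        rw [hrec, map_add, mul_add, hdq]
        linear_combination hc - (x ^ (m+1) * c) * hα1 - α * h1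
      rw [key]
      exact neg_mem (Ideal.mem_span_singleton.mpr ⟨α * d c, by ring⟩)

end Aux4

section Surj
variable {R : Type} [CommRing R] [Algebra ℚ R]

lemma xd_surj (d : Derivation ℚ R R) (x : R) (hx : d x = 1)
    (H1 : IsPrecomplete (Ideal.span {x}) R) (H2 : IsHausdorff (Ideal.span {x}) R)
    {y : R} (hy : y ∈ Ideal.span {x}) :
    ∃ a ∈ Ideal.span {x}, x * d a = y := by
  have hdiff : ∀ m, approxAux d x y (m + 1) - approxAux d x y m ∈ Ideal.span {x ^ (m + 1)} := by
    intro m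
    rw [approxAux_succ, add_sub_cancel_left, Algebra.smul_def]
    exact Ideal.mem_span_singleton.mpr
      ⟨algebraMap ℚ R (((m : ℚ) + 1)⁻¹) *
        Classical.choose (exists_div_pow x (y - x * d (approxAux d x y m)) (m + 1)), by ring⟩
  have hle : ∀ {m n : ℕ}, m ≤ n →
      approxAux d x y n - approxAux d x y m ∈ Ideal.span {x ^ m} := by
    intro m n h
    induction n, h using Nat.le_induction with
    | base => simp
    | succ n hmn ih =>
      have heq : approxAux d x y (n + 1) - approxAux d x y m =
          (approxAux d x y (n + 1) - approxAux d x y n) +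
            (approxAux d x y n - approxAux d x y m) := by ring
      rw [heq]
      refine add_mem ?_ ih
      exact Ideal.span_singleton_le_span_singleton.mpr (pow_dvd_pow x (by omega)) (hdiff n)
  have hsmod : ∀ {m n : ℕ}, m ≤ n → approxAux d x y m ≡ approxAux d x y n
      [SMOD (Ideal.span {x} ^ m • ⊤ : Submodule R R)] := by
    intro m n h
    have heq : (Ideal.span {x} ^ m • ⊤ : Submodule R R) = Ideal.span {x ^ m} := by
      simp [Ideal.span_singleton_pow]
    rw [heq]
    refine SModEq.sub_mem.mpr ?_
    have : approxAux d x y m - approxAux d x y n =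
        -(approxAux d x y n - approxAux d x y m) := by ring
    rw [this]
    exact neg_mem (hle h)
  obtain ⟨L, hL⟩ := H1.prec hsmod
  have hLm : ∀ m, L - approxAux d x y m ∈ Ideal.span {x ^ m} := by
    intro m
    have heq : (Ideal.span {x} ^ m • ⊤ : Submodule R R) = Ideal.span {x ^ m} := by
      simp [Ideal.span_singleton_pow]
    have := SModEq.sub_mem.mp ((hL m).symm)
    rwa [heq] at this
  refine ⟨L, ?_, ?_⟩
  · have h1 := hLm 1
    have heq : L = (L - approxAux d x y 1) + approxAux d x y 1 := by ring
    rw [heq]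
    exact add_mem (by simpa [pow_one] using h1) (approxAux_inv d x hx y hy 1).1
  · have hall : ∀ k, y - x * d L ∈ Ideal.span {x ^ k} := by
      intro k
      have h2 := (approxAux_inv d x hx y hy k).2
      have h2' : y - x * d (approxAux d x y k) ∈ Ideal.span {x ^ k} :=
        Ideal.span_singleton_le_span_singleton.mpr (pow_dvd_pow x (by omega)) h2
      have h3 : x * d (L - approxAux d x y k) ∈ Ideal.span {x ^ k} :=
        xd_mem d x hx (hLm k)
      have heq : y - x * d L =
          (y - x * d (approxAux d x y k)) - x * d (L - approxAux d x y k) := by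
        rw [map_sub]
        ring
      rw [heq]
      exact sub_mem h2' h3
    have := mem_all_pow_eq_zero x H2 hall
    linear_combination -this
end Surj

section Aux5
variable {S : Type} [CommRing S] [Algebra ℚ S]

lemma unit_deriv_pow (D : Derivation ℚ S S) (u : S) (hU : D u = 1) (k : ℕ) :
    u * D (u ^ k) = (k : S) * u ^ k := by
  induction k with
  | zero => simp
  | succ k ih =>
    rw [pow_succ, Derivation.leibniz, smul_eq_mul, smul_eq_mul, hU, mul_one]
    push_cast
    linear_combination u * ih

lemma unit_deriv_zpow (D : Derivation ℚ S S) (U : Sˣ) (hU : D ↑U = 1) (e : ℤ) :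
    (↑U : S) * D ↑(U ^ e) = (e : S) * ↑(U ^ e) := by
  rcases e with n | n
  · rw [Int.ofNat_eq_coe, zpow_natCast, Units.val_pow_eq_pow_val]
    push_cast
    exact unit_deriv_pow D (↑U) hU n
  · rw [zpow_negSucc]
    set V := U ^ (n + 1) with hVdef
    have hV : (↑V : S) * (↑(V⁻¹) : S) = 1 := Units.mul_inv V
    have h0 : D ((↑V : S) * ↑(V⁻¹)) = 0 := by rw [hV, Derivation.map_one_eq_zero]
    rw [Derivation.leibniz, smul_eq_mul, smul_eq_mul] at h0
    have hVpow : (↑U : S) * D ↑V = ((n + 1 : ℕ) : S) * ↑V := by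
      rw [hVdef, Units.val_pow_eq_pow_val]
      exact unit_deriv_pow D (↑U) hU (n + 1)
    have hcast : ((Int.negSucc n : ℤ) : S) = -((n + 1 : ℕ) : S) := by
      push_cast [Int.negSucc_eq]
      ring
    rw [hcast]
    linear_combination (↑U * (↑(V⁻¹) : S)) * h0 - ((↑(V⁻¹) : S) * ↑(V⁻¹)) * hVpow -
      ((↑U : S) * D (↑(V⁻¹) : S) + (-((n + 1 : ℕ) : S)) * ↑(V⁻¹)) * hV -
      (2 * ((n + 1 : ℕ) : S) * ↑(V⁻¹)) * hV
end Aux5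



open IsLocalRing in
/-- Data witnessing condition (c) of nondegeneracy for a differential local ring
`(R, Δ_R)`: a regular sequence of parameters `x_1, …, x_n` of the regular local
`ℚ`-algebra `R`, together with pairwise commuting derivations `∂_1, …, ∂_n` of
*rational type* with respect to `x_1, …, x_n`, i.e. `∂_i (x_j) = δ_{ij}`. -/
structure RationalTypeData (R : Type*) [CommRing R] [IsLocalRing R] [Algebra ℚ R]
    (n : ℕ) where
  x : Fin n → R
  d : Fin n → Derivation ℚ R R
  span_x : Ideal.span (Set.range x) = maximalIdeal R
  isRegular_x : RingTheory.Sequence.IsRegular R (List.ofFn x)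
  comm : ∀ i j, ∀ r : R, d i (d j r) = d j (d i r)
  rational : ∀ i j, d i (x j) = if i = j then (1 : R) else 0

open IsLocalRing in
/-- **Action of `x_i ∂_i` on a complete nondegenerate differential local ring.**
Let `(R, Δ_R)` be a nondegenerate differential local ring, with regular parameters
`x_1, …, x_n` and commuting derivations `∂_1, …, ∂_n` of rational type, and suppose
`R` is `x_i`-adically complete for some `i`.  Work in the localization
`L = R[x_i⁻¹]`, where `x_i` becomes a unit `u`, and let `D` be the (unique)
extension of `∂_i` to a derivation of `L`.  Then:
(a) for every integer `e`, the operator `x_i ∂_i` acts on `x_i^e R / x_i^{e+1} R`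
by multiplication by `e`: for every `a ∈ R` there is `b ∈ R` with
`x_i · D (u^e · a) - e • (u^e · a) = u^{e+1} · b`; and
(b) `x_i ∂_i` acts bijectively on the ideal `x_i R`. -/
theorem xd_acts_on_graded_pieces
    (R : Type) [CommRing R] [IsLocalRing R] [Algebra ℚ R] [IsNoetherianRing R]
    {n : ℕ} (data : RationalTypeData R n) (i : Fin n)
    (hcomplete : IsAdicComplete (Ideal.span {data.x i}) R)
    (D : Derivation ℚ (Localization.Away (data.x i)) (Localization.Away (data.x i)))
    (hD : ∀ r : R, D (algebraMap R (Localization.Away (data.x i)) r)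
      = algebraMap R (Localization.Away (data.x i)) (data.d i r)) :
    (∀ e : ℤ, ∀ a : R, ∃ b : R,
      algebraMap R (Localization.Away (data.x i)) (data.x i) *
          D (((IsLocalization.Away.algebraMap_isUnit (S := Localization.Away (data.x i))
              (data.x i)).unit ^ e : (Localization.Away (data.x i))ˣ) *
            algebraMap R (Localization.Away (data.x i)) a)
        - e • ((((IsLocalization.Away.algebraMap_isUnit
              (S := Localization.Away (data.x i)) (data.x i)).unit ^ e :
                (Localization.Away (data.x i))ˣ) : Localization.Away (data.x i)) *
            algebraMap R (Localization.Away (data.x i)) a)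
      = (((IsLocalization.Away.algebraMap_isUnit (S := Localization.Away (data.x i))
            (data.x i)).unit ^ (e + 1) : (Localization.Away (data.x i))ˣ) :
          Localization.Away (data.x i)) *
          algebraMap R (Localization.Away (data.x i)) b) ∧
    Set.BijOn (fun a : R => data.x i * data.d i a)
      (Ideal.span {data.x i} : Ideal R) (Ideal.span {data.x i} : Ideal R) := by
  classical
  have hx1 : data.d i (data.x i) = 1 := by simpa using data.rational i i
  have hU : D ↑((IsLocalization.Away.algebraMap_isUnit
      (S := Localization.Away (data.x i)) (data.x i)).unit) = 1 := by
    rw [IsUnit.unit_spec, hD, hx1, map_one]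
  constructor
  · intro e a
    refine ⟨data.d i a, ?_⟩
    set U := (IsLocalization.Away.algebraMap_isUnit
      (S := Localization.Away (data.x i)) (data.x i)).unit with hUdef
    have hxU : algebraMap R (Localization.Away (data.x i)) (data.x i) = ↑U :=
      (IsUnit.unit_spec _).symm
    have hkey := unit_deriv_zpow D U hU e
    have hsucc : (↑(U ^ (e + 1)) : Localization.Away (data.x i)) = ↑(U ^ e) * ↑U := by
      rw [zpow_add_one, Units.val_mul]
    rw [Derivation.leibniz, smul_eq_mul, smul_eq_mul, hD a, zsmul_eq_mul, hxU, hsucc]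
    linear_combination (algebraMap R (Localization.Away (data.x i)) a) * hkey
  · have Hh : IsHausdorff (Ideal.span {data.x i}) R := hcomplete.toIsHausdorff
    have Hp : IsPrecomplete (Ideal.span {data.x i}) R := hcomplete.toIsPrecomplete
    refine ⟨fun a _ => ?_, fun a ha a' ha' hfa => ?_, fun y hy => ?_⟩
    · exact (Ideal.span {data.x i}).mul_mem_right _ (Ideal.mem_span_singleton_self _)
    · simp only at hfa
      have h0 : data.x i * (data.d i a - data.d i a') = 0 := by
        rw [mul_sub, hfa, sub_self]
      have h1 : data.d i a - data.d i a' = 0 :=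
        x_regular (data.d i) (data.x i) hx1 Hh h0
      have h2 : data.d i (a - a') = 0 := by rw [map_sub]; exact h1
      have h3 : a - a' ∈ Ideal.span {data.x i} := sub_mem ha ha'
      have h4 := dc_zero (data.d i) (data.x i) hx1 Hh h3 h2
      exact sub_eq_zero.mp h4
    · obtain ⟨a, haI, hax⟩ := xd_surj (data.d i) (data.x i) hx1 Hp Hh hy
      exact ⟨a, haI, hax⟩
end

section
/- Let X be a nondegenerate differential scheme and x ∈ X. Then the residue-field pairing Δ_{O_{X,x}} × m_x/m_x² → κ_x induced by applying derivations to elements of the maximal ideal is nondegenerate on the right, and consequently the differential local ring O_{X,x} is simple (has no nonzero proper ideals stable under all its derivations). -/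
open IsLocalRing Finset in
theorem RationalTypeData.euler_one {R : Type} [CommRing R] [IsLocalRing R] [Algebra ℚ R]
    {n : ℕ} (data : RationalTypeData R n) :
    ∀ a ∈ maximalIdeal R,
      (∑ i, data.x i * data.d i a) - a ∈ (maximalIdeal R) ^ 2 := by
  intro a ha
  rw [← data.span_x] at ha
  induction ha using Submodule.span_induction with
  | mem y hy =>
      obtain ⟨j, rfl⟩ := hy
      have : (∑ i, data.x i * data.d i (data.x j)) = data.x j := by
        simp [data.rational, mul_ite]
      simp [this]
  | zero => simp
  | add y z _ _ hy hz =>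
      have h1 : (∑ i, data.x i * data.d i (y + z))
          = ∑ i, (data.x i * data.d i y + data.x i * data.d i z) :=
        Finset.sum_congr rfl (by intros; simp [mul_add])
      have : (∑ i, data.x i * data.d i (y + z)) - (y + z)
          = ((∑ i, data.x i * data.d i y) - y) + ((∑ i, data.x i * data.d i z) - z) := by
        rw [h1, Finset.sum_add_distrib]; ring
      rw [this]; exact add_mem hy hz
  | smul r y hmem hy =>
      have hy' : y ∈ maximalIdeal R := data.span_x ▸ hmem
      have h1 : (∑ i, data.x i * data.d i (r • y))
          = ∑ i, (r * (data.x i * data.d i y) + y * (data.x i * data.d i r)) :=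
        Finset.sum_congr rfl (by intros; simp [Derivation.leibniz]; ring)
      have : (∑ i, data.x i * data.d i (r • y)) - r • y
          = r * ((∑ i, data.x i * data.d i y) - y)
            + y * (∑ i, data.x i * data.d i r) := by
        rw [h1, Finset.sum_add_distrib, ← Finset.mul_sum, ← Finset.mul_sum, smul_eq_mul]; ring
      rw [this]
      refine add_mem (Ideal.mul_mem_left _ _ hy) ?_
      have hsum : (∑ i, data.x i * data.d i r) ∈ maximalIdeal R := by
        refine Submodule.sum_mem _ fun i _ => Ideal.mul_mem_right _ _ ?_
        rw [← data.span_x]; exact Submodule.subset_span ⟨i, rfl⟩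
      have := Ideal.mul_mem_mul hy' hsum
      rwa [pow_two]

open IsLocalRing Finset in
theorem RationalTypeData.euler {R : Type} [CommRing R] [IsLocalRing R] [Algebra ℚ R]
    {n : ℕ} (data : RationalTypeData R n) :
    ∀ k : ℕ, ∀ f ∈ (maximalIdeal R) ^ (k + 1),
      (∑ i, data.x i * data.d i f) - ((k + 1 : ℕ) : R) * f ∈ (maximalIdeal R) ^ (k + 2) := by
  intro k
  induction k with
  | zero =>
      intro f hf
      have := data.euler_one f (by simpa using hf)
      simpa using this
  | succ k ih =>
      intro f hf
      rw [pow_succ] at hf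
      refine Submodule.mul_induction_on hf ?_ ?_
      · intro b hb a ha
        have h1 : (∑ i, data.x i * data.d i (b * a))
            = ∑ i, (b * (data.x i * data.d i a) + a * (data.x i * data.d i b)) :=
          Finset.sum_congr rfl (by intros; simp [Derivation.leibniz]; ring)
        have key : (∑ i, data.x i * data.d i (b * a)) - ((k + 2 : ℕ) : R) * (b * a)
            = b * ((∑ i, data.x i * data.d i a) - a)
              + a * ((∑ i, data.x i * data.d i b) - ((k + 1 : ℕ) : R) * b) := by
          rw [h1, Finset.sum_add_distrib, ← Finset.mul_sum, ← Finset.mul_sum]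
          push_cast; ring
        rw [key]
        refine add_mem ?_ ?_
        · have h2 := data.euler_one a ha
          have := Ideal.mul_mem_mul hb h2
          rwa [← pow_add] at this
        · have h3 := ih b hb
          have := Ideal.mul_mem_mul ha h3
          rwa [← pow_succ'] at this
      · intro g h ihg ihh
        have h1 : (∑ i, data.x i * data.d i (g + h))
            = ∑ i, (data.x i * data.d i g + data.x i * data.d i h) :=
          Finset.sum_congr rfl (by intros; simp [mul_add])
        have key : (∑ i, data.x i * data.d i (g + h)) - ((k + 2 : ℕ) : R) * (g + h)
            = ((∑ i, data.x i * data.d i g) - ((k + 2 : ℕ) : R) * g)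
              + ((∑ i, data.x i * data.d i h) - ((k + 2 : ℕ) : R) * h) := by
          rw [h1, Finset.sum_add_distrib]; ring
        rw [key]; exact add_mem ihg ihh

open IsLocalRing Finset in
theorem RationalTypeData.step {R : Type} [CommRing R] [IsLocalRing R] [Algebra ℚ R]
    {n : ℕ} (data : RationalTypeData R n) (k : ℕ) (f : R)
    (hf : f ∈ (maximalIdeal R) ^ (k + 1))
    (hdf : ∀ i, data.d i f ∈ (maximalIdeal R) ^ (k + 1)) :
    f ∈ (maximalIdeal R) ^ (k + 2) := by
  have hE : (∑ i, data.x i * data.d i f) ∈ (maximalIdeal R) ^ (k + 2) := by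
    refine Submodule.sum_mem _ fun i _ => ?_
    have hx : data.x i ∈ maximalIdeal R := by
      rw [← data.span_x]; exact Submodule.subset_span ⟨i, rfl⟩
    have := Ideal.mul_mem_mul hx (hdf i)
    rwa [← pow_succ'] at this
  have hkf : ((k + 1 : ℕ) : R) * f ∈ (maximalIdeal R) ^ (k + 2) := by
    have := sub_mem hE (data.euler k f hf)
    simpa using this
  have hcast : ((k + 1 : ℕ) : R) = algebraMap ℚ R ((k : ℚ) + 1) := by
    rw [show ((k : ℚ) + 1) = ((k + 1 : ℕ) : ℚ) by push_cast; ring, map_natCast]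
  have hne : ((k : ℚ) + 1) ≠ 0 := by positivity
  have : f = algebraMap ℚ R (((k : ℚ) + 1)⁻¹) * (((k + 1 : ℕ) : R) * f) := by
    rw [hcast, ← mul_assoc, ← map_mul, inv_mul_cancel₀ hne, map_one, one_mul]
  rw [this]
  exact Ideal.mul_mem_left _ _ hkf

open IsLocalRing in
/-- **Nondegeneracy of the residue pairing, and differential simplicity.**
Let `X` be a nondegenerate differential scheme and `x ∈ X`; equivalently, let
`R = O_{X,x}` be a nondegenerate differential local ring, with regular parameters
`x_1, …, x_n` and commuting derivations `∂_1, …, ∂_n` of rational type.  Then the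
pairing `Δ_R × m/m² → κ`, `(∂, f) ↦ ∂(f) mod m`, is nondegenerate on the right:
any `f ∈ m` all of whose derivatives `∂_i f` lie in `m` must lie in `m²`.
Consequently `R` is differentially simple: it has no nonzero proper ideal stable
under all the derivations. -/
theorem residue_pairing_nondegenerate_and_simple
    (R : Type) [CommRing R] [IsLocalRing R] [Algebra ℚ R] [IsNoetherianRing R]
    {n : ℕ} (data : RationalTypeData R n) :
    (∀ f ∈ maximalIdeal R, (∀ i, data.d i f ∈ maximalIdeal R) →
      f ∈ (maximalIdeal R) ^ 2) ∧
    (∀ I : Ideal R, (∀ i, ∀ a ∈ I, data.d i a ∈ I) → I = ⊥ ∨ I = ⊤) := by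
  constructor
  · intro f hf hdf
    have := data.step 0 f (by simpa using hf) (fun i => by simpa using hdf i)
    simpa using this
  · intro I hI
    by_cases hT : I = ⊤
    · exact Or.inr hT
    · left
      have hIm : I ≤ maximalIdeal R := le_maximalIdeal hT
      have hpow : ∀ k : ℕ, ∀ a ∈ I, a ∈ (maximalIdeal R) ^ (k + 1) := by
        intro k
        induction k with
        | zero => intro a ha; simpa using hIm ha
        | succ k ih =>
            intro a ha
            exact data.step k a (ih a ha) (fun i => ih _ (hI i a ha))
      rw [eq_bot_iff]
      intro a ha
      have hmem : a ∈ ⨅ i : ℕ, (maximalIdeal R) ^ i := by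
        rw [Ideal.mem_iInf]
        intro i
        exact Ideal.pow_le_pow_right (Nat.le_succ i) (hpow i a ha)
      rwa [Ideal.iInf_pow_eq_bot_of_isLocalRing _
        (Ideal.IsMaximal.ne_top (maximalIdeal.isMaximal R))] at hmem
end

section
/- Let X be an integral nondegenerate differential scheme. Then the subring of global sections Γ(X, O_X) killed by all derivations in D_X is a field. -/
section Euler

variable {A : Type*} [CommRing A] [Algebra ℚ A] {n : ℕ}
  (x : Fin n → A) (d : Fin n → Derivation ℚ A A)

lemma euler_mem (b : A) : ∑ i, x i * d i b ∈ Ideal.span (Set.range x) :=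
  Ideal.sum_mem _ fun i _ => Ideal.mul_mem_right _ _ (Ideal.subset_span ⟨i, rfl⟩)

lemma euler_mul (a b : A) :
    ∑ i, x i * d i (a * b)
      = a * (∑ i, x i * d i b) + b * (∑ i, x i * d i a) := by
  rw [Finset.mul_sum, Finset.mul_sum, ← Finset.sum_add_distrib]
  refine Finset.sum_congr rfl fun i _ => ?_
  rw [Derivation.leibniz, smul_eq_mul, smul_eq_mul]
  ring

lemma euler_add (a b : A) :
    ∑ i, x i * d i (a + b) = (∑ i, x i * d i a) + (∑ i, x i * d i b) := by
  simp [map_add, mul_add, Finset.sum_add_distrib]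

lemma euler_one (hrat : ∀ i j, d i (x j) = if i = j then (1 : A) else 0)
    {b : A} (hb : b ∈ Ideal.span (Set.range x)) :
    (∑ i, x i * d i b) - b ∈ (Ideal.span (Set.range x)) ^ 2 := by
  induction hb using Submodule.span_induction with
  | mem v hv =>
    obtain ⟨j, rfl⟩ := hv
    have : ∑ i, x i * d i (x j) = x j := by
      simp [hrat, mul_ite, Finset.sum_ite_eq']
    rw [this, sub_self]
    exact zero_mem _
  | zero => simp
  | add u v hu hv ihu ihv =>
    have h : (∑ i, x i * d i (u + v)) - (u + v)
        = ((∑ i, x i * d i u) - u) + ((∑ i, x i * d i v) - v) := by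
      rw [euler_add]; ring
    rw [h]; exact add_mem ihu ihv
  | smul r v hv ih =>
    have h : (∑ i, x i * d i (r • v)) - r • v
        = r * ((∑ i, x i * d i v) - v) + v * (∑ i, x i * d i r) := by
      rw [smul_eq_mul, euler_mul]; ring
    rw [h]
    refine add_mem ?_ ?_
    · exact Ideal.mul_mem_left _ _ ih
    · have := Ideal.mul_mem_mul hv (euler_mem x d r)
      rw [sq]; exact this

lemma euler_pow (hrat : ∀ i j, d i (x j) = if i = j then (1 : A) else 0) :
    ∀ (k : ℕ) (b : A), b ∈ (Ideal.span (Set.range x)) ^ k →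
      (∑ i, x i * d i b) - (k : A) * b ∈ (Ideal.span (Set.range x)) ^ (k + 1) := by
  intro k
  induction k with
  | zero => intro b _; simpa using euler_mem x d b
  | succ k ih =>
    intro b hb
    rw [pow_succ] at hb
    refine Submodule.mul_induction_on hb ?_ ?_
    · intro u hu v hv
      have key : (∑ i, x i * d i (u * v)) - ((k + 1 : ℕ) : A) * (u * v)
          = u * ((∑ i, x i * d i v) - v) + v * ((∑ i, x i * d i u) - (k : A) * u) := by
        rw [euler_mul]; push_cast; ring
      rw [key]
      refine add_mem ?_ ?_
      · have := Ideal.mul_mem_mul hu (euler_one x d hrat hv)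
        rwa [← pow_add] at this
      · have := Ideal.mul_mem_mul hv (ih u hu)
        rwa [← pow_succ'] at this
    · intro b₁ b₂ h₁ h₂
      have h : (∑ i, x i * d i (b₁ + b₂)) - ((k + 1 : ℕ) : A) * (b₁ + b₂)
          = ((∑ i, x i * d i b₁) - ((k + 1 : ℕ) : A) * b₁)
            + ((∑ i, x i * d i b₂) - ((k + 1 : ℕ) : A) * b₂) := by
        rw [euler_add]; ring
      rw [h]; exact add_mem h₁ h₂

lemma constant_eq_zero {A : Type*} [CommRing A] [IsDomain A] [Algebra ℚ A] [IsNoetherianRing A]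
    {n : ℕ} (x : Fin n → A) (d : Fin n → Derivation ℚ A A)
    (hrat : ∀ i j, d i (x j) = if i = j then (1 : A) else 0)
    (hne : Ideal.span (Set.range x) ≠ ⊤)
    {a : A} (ha : a ∈ Ideal.span (Set.range x)) (hd : ∀ i, d i a = 0) : a = 0 := by
  set I := Ideal.span (Set.range x) with hI
  have hk : ∀ k, a ∈ I ^ (k + 1) := by
    intro k
    induction k with
    | zero => simpa using ha
    | succ k ih =>
      have h := euler_pow x d hrat (k + 1) a ih
      simp only [hd, mul_zero, Finset.sum_const_zero, zero_sub] at h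
      have h' : ((k + 1 : ℕ) : A) * a ∈ I ^ (k + 2) := by
        have := neg_mem h; simpa using this
      have hu : IsUnit ((k + 1 : ℕ) : A) := by
        have he : ((k + 1 : ℕ) : A) = algebraMap ℚ A ((k + 1 : ℕ) : ℚ) := by
          rw [map_natCast]
        rw [he]
        exact (isUnit_iff_ne_zero.mpr (by exact_mod_cast Nat.succ_ne_zero k)).map _
      obtain ⟨u, hu⟩ := hu
      have h2 := Ideal.mul_mem_left _ (↑u⁻¹ : A) h'
      rwa [← mul_assoc, ← hu, Units.inv_mul, one_mul] at h2
  have hbot : (⨅ k : ℕ, I ^ k) = ⊥ := Ideal.iInf_pow_eq_bot_of_isDomain I hne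
  have hmem : a ∈ (⊥ : Ideal A) := by
    rw [← hbot]
    refine Ideal.mem_iInf.mpr fun k => ?_
    cases k with
    | zero => simp
    | succ k => exact hk k
  exact Ideal.mem_bot.mp hmem

end Euler


/-- **The constants of an integral nondegenerate differential scheme form a field.**
Let `X = Spec R` be an integral nondegenerate differential scheme: `R` is a
noetherian domain (of finite Krull dimension) with a coherent module `Δ` of
derivations closed under the Lie bracket, such that every local ring of `X` is a
nondegenerate differential local ring — i.e. at each maximal ideal `p`, the
localization `R_p` carries commuting derivations of rational type with respect to a
regular system of parameters, each induced by `Δ` (up to a denominator outside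
`p`).  Then the subring of global sections `Γ(X, O_X) = R` killed by all
derivations in `Δ` is a field: every nonzero constant has a constant inverse. -/
theorem constants_form_a_field
    (R : Type) [CommRing R] [IsDomain R] [Algebra ℚ R] [IsNoetherianRing R]
    (hfin : ringKrullDim R ≠ ⊤)
    (Δ : Submodule R (Derivation ℚ R R))
    (hLie : ∀ D₁ ∈ Δ, ∀ D₂ ∈ Δ, ⁅D₁, D₂⁆ ∈ Δ)
    (hnondeg : ∀ p : Ideal R, ∀ hp : p.IsMaximal,
      haveI : p.IsPrime := hp.isPrime
      ∃ (n : ℕ) (data : RationalTypeData (Localization.AtPrime p) n),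
        ∀ i, ∃ D ∈ Δ, ∃ s : R, s ∉ p ∧ ∀ r : R,
          algebraMap R (Localization.AtPrime p) s *
              data.d i (algebraMap R (Localization.AtPrime p) r)
            = algebraMap R (Localization.AtPrime p) (D r)) :
    ∀ r : R, (∀ D ∈ Δ, D r = 0) → r ≠ 0 →
      ∃ s : R, (∀ D ∈ Δ, D s = 0) ∧ r * s = 1 := by
  intro r hr hr0
  by_cases hu : IsUnit r
  · obtain ⟨u, rfl⟩ := hu
    refine ⟨↑u⁻¹, ?_, u.mul_inv⟩
    intro D hD
    have h1 : D ((↑u : R) * ↑u⁻¹) = 0 := by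
      rw [u.mul_inv]; exact D.map_one_eq_zero
    rw [Derivation.leibniz, smul_eq_mul, smul_eq_mul, hr D hD, mul_zero, add_zero] at h1
    exact (mul_eq_zero.mp h1).resolve_left (Units.ne_zero u)
  · have hne : Ideal.span {r} ≠ ⊤ := fun h => hu (Ideal.span_singleton_eq_top.mp h)
    obtain ⟨p, hpmax, hle⟩ := Ideal.exists_le_maximal _ hne
    have hrp : r ∈ p := hle (Ideal.subset_span rfl)
    haveI := hpmax.isPrime
    obtain ⟨n, data, hdata⟩ := hnondeg p hpmax
    set A := Localization.AtPrime p with hA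
    haveI : IsNoetherianRing A :=
      IsLocalization.isNoetherianRing p.primeCompl A inferInstance
    set a := algebraMap R A r with ha
    have hinj := IsLocalization.injective (M := p.primeCompl) A p.primeCompl_le_nonZeroDivisors
    have ha0 : a ≠ 0 := fun h => hr0 (hinj (by rw [← ha, h, map_zero]))
    have ham : a ∈ IsLocalRing.maximalIdeal A :=
      (IsLocalization.AtPrime.to_map_mem_maximal_iff A p r).mpr hrp
    have hd : ∀ i, data.d i a = 0 := by
      intro i
      obtain ⟨D, hD, s, hs, hspec⟩ := hdata i
      have h1 := hspec r
      rw [hr D hD, map_zero] at h1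
      have hus : IsUnit (algebraMap R A s) := IsLocalization.map_units (M := p.primeCompl) A ⟨s, hs⟩
      exact (hus.mul_right_eq_zero).mp h1
    have hamem : a ∈ Ideal.span (Set.range data.x) := by rw [data.span_x]; exact ham
    have hnetop : Ideal.span (Set.range data.x) ≠ ⊤ := by
      rw [data.span_x]; exact (IsLocalRing.maximalIdeal.isMaximal A).ne_top
    exact absurd (constant_eq_zero data.x data.d data.rational hnetop hamem hd) ha0
end

section
/- (Robba–Christol factorization) Let R be a complete nonarchimedean (not necessarily commutative) normed ring, a, b, c ∈ R nonzero, and U, V, W ⊆ R additive subgroups such that: U, V are complete, UV ⊆ W; the map f(u,v) = av + ub surjects U × V onto W; there is λ ∈ (0,1] with |f(u,v)| ≥ λ max{|a||v|, |b||u|} for all u ∈ U, v ∈ V; and ab − c ∈ W with |ab−c| < λ²|c|. Then there is a unique pair (x, y) ∈ U × V with c = (a+x)(b+y), |x| < λ|a|, |y| < λ|b|; moreover |x| ≤ λ⁻¹|ab−c||b|⁻¹ and |y| ≤ λ⁻¹|ab−c||a|⁻¹. -/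
/-!
Writing `x, y` for the corrections, `c = (a + x)(b + y)` is the fixed-point equation
`f(x, y) = (c - ab) - xy` for the linear map `f(u, v) = av + ub`. Starting from `0` and solving
`f(xₙ₊₁, yₙ₊₁) = (c - ab) - xₙyₙ` by surjectivity, the coercivity bound on `f` keeps the iterates
in the box `λ‖b‖‖x‖, λ‖a‖‖y‖ ≤ ‖ab - c‖` and shrinks successive differences by the factor
`q = ‖ab - c‖ / (λ²‖a‖‖b‖)`. The ultrametric inequality gives `‖c‖ ≤ ‖a‖‖b‖`, hence `q < 1`, so the
iterates converge in the complete groups `U, V` to a solution. The same coercivity estimate,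
applied to the difference of two solutions, gives uniqueness.
-/

open Filter

namespace RobbaChristol

lemma le_inv_mul_div_of_mul_le {lam B s t : ℝ} (hlam : 0 < lam) (hB : 0 < B)
    (h : lam * (B * s) ≤ t) : s ≤ lam⁻¹ * t / B := by
  rwa [le_div_iff₀ hB, le_inv_mul_iff₀ hlam, mul_comm s]

lemma mul_le_of_le_inv_mul_div {lam A B s t e d : ℝ} (hlam : 0 < lam) (hA : 0 < A) (hB : 0 < B)
    (he : 0 ≤ e) (ht : 0 ≤ t) (hs : s ≤ lam⁻¹ * e / B) (ht' : t ≤ lam⁻¹ * d / A) :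
    s * t ≤ e / (lam ^ 2 * (A * B)) * d := by
  refine (mul_le_mul hs ht' ht (by positivity)).trans_eq ?_
  field_simp

lemma inv_mul_div_lt_of_lt_sq_mul {lam e A B : ℝ} (hlam : 0 < lam) (hA : 0 < A) (hB : 0 < B)
    (h : e < lam ^ 2 * (A * B)) : lam⁻¹ * e / B < lam * A ∧ lam⁻¹ * e / A < lam * B := by
  rw [div_lt_iff₀ hA, div_lt_iff₀ hB, inv_mul_lt_iff₀ hlam, inv_mul_lt_iff₀ hlam]
  constructor <;> linarith

section Ring

variable {R : Type*} [Ring R] {a b c : R} {U V W : AddSubgroup R}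

lemma exists_iterates (hUV : ∀ u ∈ U, ∀ v ∈ V, u * v ∈ W)
    (hsurj : ∀ w ∈ W, ∃ u ∈ U, ∃ v ∈ V, a * v + u * b = w) (habc : a * b - c ∈ W) :
    ∃ x y : ℕ → R, x 0 = 0 ∧ y 0 = 0 ∧ (∀ n, x n ∈ U ∧ y n ∈ V) ∧
      ∀ n, a * y (n + 1) + x (n + 1) * b = c - a * b - x n * y n := by
  have hstep (p : U × V) : ∃ q : U × V, a * q.2 + q.1 * b = c - a * b - p.1 * p.2 := by
    have hw : c - a * b - p.1 * p.2 ∈ W := by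
      rw [← neg_sub (a * b) c]
      exact sub_mem (neg_mem habc) (hUV _ p.1.2 _ p.2.2)
    obtain ⟨u, hu, v, hv, h⟩ := hsurj _ hw
    exact ⟨(⟨u, hu⟩, ⟨v, hv⟩), h⟩
  choose g hg using hstep
  refine ⟨fun n => (g^[n] 0).1, fun n => (g^[n] 0).2, rfl, rfl,
    fun n => ⟨(g^[n] 0).1.2, (g^[n] 0).2.2⟩, fun n => ?_⟩
  simp only [Function.iterate_succ_apply']
  exact hg _

lemma mul_add_mul_sub_eq {x y : ℕ → R}
    (hstep : ∀ n, a * y (n + 1) + x (n + 1) * b = c - a * b - x n * y n) (n : ℕ) :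
    a * (y (n + 2) - y (n + 1)) + (x (n + 2) - x (n + 1)) * b =
      -(x (n + 1) * (y (n + 1) - y n) + (x (n + 1) - x n) * y n) :=
  calc _ = (a * y (n + 2) + x (n + 2) * b) - (a * y (n + 1) + x (n + 1) * b) := by noncomm_ring
    _ = (c - a * b - x (n + 1) * y (n + 1)) - (c - a * b - x n * y n) := by rw [hstep, hstep]
    _ = _ := by noncomm_ring

end Ring

section NormedRing

variable {R : Type*} [NormedRing R] {a b c : R} {U V W : AddSubgroup R} {lam : ℝ}

lemma norm_le_of_norm_mul_add_mul_le (hlam : 0 < lam) (ha : a ≠ 0) (hb : b ≠ 0)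
    (hbound : ∀ u ∈ U, ∀ v ∈ V, lam * max (‖a‖ * ‖v‖) (‖b‖ * ‖u‖) ≤ ‖a * v + u * b‖)
    {u v : R} (hu : u ∈ U) (hv : v ∈ V) {t : ℝ} (h : ‖a * v + u * b‖ ≤ t) :
    ‖u‖ ≤ lam⁻¹ * t / ‖b‖ ∧ ‖v‖ ≤ lam⁻¹ * t / ‖a‖ := by
  have hcoerc := (hbound u hu v hv).trans h
  rw [mul_max_of_nonneg _ _ hlam.le, max_le_iff] at hcoerc
  exact ⟨le_inv_mul_div_of_mul_le hlam (norm_pos_iff.mpr hb) hcoerc.2,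
    le_inv_mul_div_of_mul_le hlam (norm_pos_iff.mpr ha) hcoerc.1⟩

variable [IsUltrametricDist R]

lemma norm_sub_le_max (p q : R) : ‖p - q‖ ≤ max ‖p‖ ‖q‖ := by
  simpa only [dist_eq_norm, sub_zero, zero_sub, norm_neg] using dist_triangle_max p 0 q

lemma norm_mul_add_mul_le_max (p q r s : R) :
    ‖p * q + r * s‖ ≤ max (‖p‖ * ‖q‖) (‖r‖ * ‖s‖) :=
  (IsUltrametricDist.norm_add_le_max _ _).trans (max_le_max (norm_mul_le _ _) (norm_mul_le _ _))

lemma mul_norm_le_norm_of_mem (hsurj : ∀ w ∈ W, ∃ u ∈ U, ∃ v ∈ V, a * v + u * b = w)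
    (hlam : 0 ≤ lam)
    (hbound : ∀ u ∈ U, ∀ v ∈ V, lam * max (‖a‖ * ‖v‖) (‖b‖ * ‖u‖) ≤ ‖a * v + u * b‖)
    {w : R} (hw : w ∈ W) : lam * ‖w‖ ≤ ‖w‖ := by
  obtain ⟨u, hu, v, hv, rfl⟩ := hsurj w hw
  calc lam * ‖a * v + u * b‖ ≤ lam * max (‖a‖ * ‖v‖) (‖b‖ * ‖u‖) := by
        gcongr
        simpa only [mul_comm ‖u‖] using norm_mul_add_mul_le_max a v u b
    _ ≤ ‖a * v + u * b‖ := hbound u hu v hv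

/-- The defect `ab - c` is small not only against `c` but also against `ab`: this is what makes
the iteration below a contraction. -/
lemma norm_mul_sub_lt (hsurj : ∀ w ∈ W, ∃ u ∈ U, ∃ v ∈ V, a * v + u * b = w) (hlam : 0 < lam)
    (hbound : ∀ u ∈ U, ∀ v ∈ V, lam * max (‖a‖ * ‖v‖) (‖b‖ * ‖u‖) ≤ ‖a * v + u * b‖)
    (habc : a * b - c ∈ W) (hsmall : ‖a * b - c‖ < lam ^ 2 * ‖c‖) :
    ‖a * b - c‖ < lam ^ 2 * (‖a‖ * ‖b‖) := by
  have hW := mul_norm_le_norm_of_mem hsurj hlam.le hbound habc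
  have hdefect : ‖a * b - c‖ < ‖c‖ := by
    by_contra! h
    nlinarith [norm_nonneg (a * b - c), norm_nonneg c]
  have hc : ‖c‖ ≤ ‖a‖ * ‖b‖ := by
    have h := norm_sub_le_max (a * b) (a * b - c)
    rw [sub_sub_cancel] at h
    exact ((le_max_iff.mp h).resolve_right hdefect.not_ge).trans (norm_mul_le a b)
  exact hsmall.trans_le (by gcongr)

lemma eq_and_eq_of_factorizations (hlam : 0 < lam) (ha : a ≠ 0) (hb : b ≠ 0)
    (hbound : ∀ u ∈ U, ∀ v ∈ V, lam * max (‖a‖ * ‖v‖) (‖b‖ * ‖u‖) ≤ ‖a * v + u * b‖)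
    {x y x' y' : R} (hx : x ∈ U) (hy : y ∈ V) (hx' : x' ∈ U) (hy' : y' ∈ V)
    (hxy : c = (a + x) * (b + y)) (hxy' : c = (a + x') * (b + y'))
    (hx'a : ‖x'‖ < lam * ‖a‖) (hyb : ‖y‖ < lam * ‖b‖) : x' = x ∧ y' = y := by
  set u := x' - x
  set v := y' - y
  have hlin : a * v + u * b = -(x' * v + u * y) := by
    rw [eq_neg_iff_add_eq_zero]
    calc a * v + u * b + (x' * v + u * y) = (a + x') * (b + y') - (a + x) * (b + y) := by
          simp only [u, v]; noncomm_ring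
      _ = 0 := by rw [← hxy, ← hxy', sub_self]
  have hcoerc : lam * max (‖a‖ * ‖v‖) (‖b‖ * ‖u‖) ≤ max (‖x'‖ * ‖v‖) (‖u‖ * ‖y‖) :=
    calc _ ≤ ‖a * v + u * b‖ := hbound u (sub_mem hx' hx) v (sub_mem hy' hy)
      _ ≤ _ := by rw [hlin, norm_neg]; exact norm_mul_add_mul_le_max _ _ _ _
  -- `‖x'‖ < λ‖a‖` and `‖y‖ < λ‖b‖` make the right side strictly smaller unless `u = v = 0`.
  have hzero : max (‖a‖ * ‖v‖) (‖b‖ * ‖u‖) ≤ 0 := by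
    have hAv := le_max_left (‖a‖ * ‖v‖) (‖b‖ * ‖u‖)
    have hBu := le_max_right (‖a‖ * ‖v‖) (‖b‖ * ‖u‖)
    have hu := norm_nonneg u
    have hv := norm_nonneg v
    rcases max_cases (‖x'‖ * ‖v‖) (‖u‖ * ‖y‖) with ⟨h, -⟩ | ⟨h, -⟩ <;> rw [h] at hcoerc
    · have : ‖v‖ = 0 := by nlinarith
      rw [this] at hcoerc ⊢; nlinarith
    · have : ‖u‖ = 0 := by nlinarith
      rw [this] at hcoerc ⊢; nlinarith
  have hv : v = 0 := norm_eq_zero.mp <| le_antisymm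
    (nonpos_of_mul_nonpos_right ((le_max_left _ _).trans hzero) (norm_pos_iff.mpr ha))
    (norm_nonneg v)
  have hu : u = 0 := norm_eq_zero.mp <| le_antisymm
    (nonpos_of_mul_nonpos_right ((le_max_right _ _).trans hzero) (norm_pos_iff.mpr hb))
    (norm_nonneg u)
  exact ⟨sub_eq_zero.mp hu, sub_eq_zero.mp hv⟩

section Iterates

variable {x y : ℕ → R}

lemma norm_iterate_le (hlam : 0 < lam) (ha : a ≠ 0) (hb : b ≠ 0)
    (hbound : ∀ u ∈ U, ∀ v ∈ V, lam * max (‖a‖ * ‖v‖) (‖b‖ * ‖u‖) ≤ ‖a * v + u * b‖)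
    (hε : ‖a * b - c‖ < lam ^ 2 * (‖a‖ * ‖b‖)) (hx0 : x 0 = 0) (hy0 : y 0 = 0)
    (hmem : ∀ n, x n ∈ U ∧ y n ∈ V)
    (hstep : ∀ n, a * y (n + 1) + x (n + 1) * b = c - a * b - x n * y n) (n : ℕ) :
    ‖x n‖ ≤ lam⁻¹ * ‖a * b - c‖ / ‖b‖ ∧ ‖y n‖ ≤ lam⁻¹ * ‖a * b - c‖ / ‖a‖ := by
  induction n with
  | zero => simp only [hx0, hy0, norm_zero]; constructor <;> positivity
  | succ n ih =>
    refine norm_le_of_norm_mul_add_mul_le hlam ha hb hbound (hmem _).1 (hmem _).2 ?_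
    have hq : ‖a * b - c‖ / (lam ^ 2 * (‖a‖ * ‖b‖)) ≤ 1 :=
      (div_le_one (by positivity)).mpr hε.le
    have hprod : ‖x n * y n‖ ≤ ‖a * b - c‖ :=
      calc ‖x n * y n‖ ≤ ‖x n‖ * ‖y n‖ := norm_mul_le _ _
        _ ≤ ‖a * b - c‖ / (lam ^ 2 * (‖a‖ * ‖b‖)) * ‖a * b - c‖ :=
          mul_le_of_le_inv_mul_div hlam (norm_pos_iff.mpr ha) (norm_pos_iff.mpr hb)
            (norm_nonneg _) (norm_nonneg _) ih.1 ih.2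
        _ ≤ ‖a * b - c‖ := mul_le_of_le_one_left (norm_nonneg _) hq
    rw [hstep]
    exact (norm_sub_le_max _ _).trans (max_le (norm_sub_rev _ _).le hprod)

lemma norm_iterate_sub_le (hlam : 0 < lam) (ha : a ≠ 0) (hb : b ≠ 0)
    (hbound : ∀ u ∈ U, ∀ v ∈ V, lam * max (‖a‖ * ‖v‖) (‖b‖ * ‖u‖) ≤ ‖a * v + u * b‖)
    (hε : ‖a * b - c‖ < lam ^ 2 * (‖a‖ * ‖b‖)) (hx0 : x 0 = 0) (hy0 : y 0 = 0)
    (hmem : ∀ n, x n ∈ U ∧ y n ∈ V)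
    (hstep : ∀ n, a * y (n + 1) + x (n + 1) * b = c - a * b - x n * y n) (n : ℕ) :
    let q := ‖a * b - c‖ / (lam ^ 2 * (‖a‖ * ‖b‖))
    ‖x (n + 1) - x n‖ ≤ lam⁻¹ * (‖a * b - c‖ * q ^ n) / ‖b‖ ∧
      ‖y (n + 1) - y n‖ ≤ lam⁻¹ * (‖a * b - c‖ * q ^ n) / ‖a‖ := by
  intro q
  have hA := norm_pos_iff.mpr ha
  have hB := norm_pos_iff.mpr hb
  have hbd := norm_iterate_le hlam ha hb hbound hε hx0 hy0 hmem hstep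
  induction n with
  | zero =>
    refine norm_le_of_norm_mul_add_mul_le hlam ha hb hbound
      (sub_mem (hmem 1).1 (hmem 0).1) (sub_mem (hmem 1).2 (hmem 0).2) ?_
    rw [hx0, hy0, sub_zero, sub_zero, hstep, hx0, zero_mul, sub_zero, norm_sub_rev, pow_zero,
      mul_one]
  | succ n ih =>
    refine norm_le_of_norm_mul_add_mul_le hlam ha hb hbound
      (sub_mem (hmem _).1 (hmem _).1) (sub_mem (hmem _).2 (hmem _).2) ?_
    rw [mul_add_mul_sub_eq hstep, norm_neg]
    refine (norm_mul_add_mul_le_max _ _ _ _).trans (max_le ?_ ?_)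
    · calc ‖x (n + 1)‖ * ‖y (n + 1) - y n‖ ≤ q * (‖a * b - c‖ * q ^ n) :=
            mul_le_of_le_inv_mul_div hlam hA hB (norm_nonneg _) (norm_nonneg _) (hbd _).1 ih.2
        _ = ‖a * b - c‖ * q ^ (n + 1) := by ring
    · calc ‖x (n + 1) - x n‖ * ‖y n‖
            ≤ ‖a * b - c‖ * q ^ n / (lam ^ 2 * (‖a‖ * ‖b‖)) * ‖a * b - c‖ :=
            mul_le_of_le_inv_mul_div hlam hA hB (by positivity) (norm_nonneg _) ih.1 (hbd _).2
        _ = ‖a * b - c‖ * q ^ (n + 1) := by ring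

end Iterates

theorem exists_factorization (hU : IsComplete (U : Set R)) (hV : IsComplete (V : Set R))
    (hUV : ∀ u ∈ U, ∀ v ∈ V, u * v ∈ W)
    (hsurj : ∀ w ∈ W, ∃ u ∈ U, ∃ v ∈ V, a * v + u * b = w)
    (hlam : 0 < lam) (ha : a ≠ 0) (hb : b ≠ 0)
    (hbound : ∀ u ∈ U, ∀ v ∈ V, lam * max (‖a‖ * ‖v‖) (‖b‖ * ‖u‖) ≤ ‖a * v + u * b‖)
    (habc : a * b - c ∈ W) (hε : ‖a * b - c‖ < lam ^ 2 * (‖a‖ * ‖b‖)) :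
    ∃ x ∈ U, ∃ y ∈ V, c = (a + x) * (b + y) ∧
      ‖x‖ ≤ lam⁻¹ * ‖a * b - c‖ / ‖b‖ ∧ ‖y‖ ≤ lam⁻¹ * ‖a * b - c‖ / ‖a‖ := by
  obtain ⟨x, y, hx0, hy0, hmem, hstep⟩ := exists_iterates hUV hsurj habc
  have hbd := norm_iterate_le hlam ha hb hbound hε hx0 hy0 hmem hstep
  have hdiff := norm_iterate_sub_le hlam ha hb hbound hε hx0 hy0 hmem hstep
  have hq : ‖a * b - c‖ / (lam ^ 2 * (‖a‖ * ‖b‖)) < 1 :=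
    (div_lt_one ((norm_nonneg _).trans_lt hε)).mpr hε
  have hxc : CauchySeq x := cauchySeq_of_le_geometric _ (lam⁻¹ * ‖a * b - c‖ / ‖b‖) hq
    fun n => by rw [dist_eq_norm']; exact (hdiff n).1.trans_eq (by ring)
  have hyc : CauchySeq y := cauchySeq_of_le_geometric _ (lam⁻¹ * ‖a * b - c‖ / ‖a‖) hq
    fun n => by rw [dist_eq_norm']; exact (hdiff n).2.trans_eq (by ring)
  obtain ⟨x₀, hx₀, hx⟩ := cauchySeq_tendsto_of_isComplete hU (fun n => (hmem n).1) hxc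
  obtain ⟨y₀, hy₀, hy⟩ := cauchySeq_tendsto_of_isComplete hV (fun n => (hmem n).2) hyc
  have hlim : a * y₀ + x₀ * b = c - a * b - x₀ * y₀ := by
    refine tendsto_nhds_unique (((hy.comp (tendsto_add_atTop_nat 1)).const_mul a).add
      ((hx.comp (tendsto_add_atTop_nat 1)).mul_const b)) ?_
    simp only [Function.comp_def, hstep]
    exact tendsto_const_nhds.sub (hx.mul hy)
  refine ⟨x₀, hx₀, y₀, hy₀, ?_, le_of_tendsto' hx.norm fun n => (hbd n).1,
    le_of_tendsto' hy.norm fun n => (hbd n).2⟩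
  calc c = a * b + (a * y₀ + x₀ * b) + x₀ * y₀ := by rw [hlim]; noncomm_ring
    _ = (a + x₀) * (b + y₀) := by noncomm_ring

end NormedRing

end RobbaChristol

open RobbaChristol

theorem robba_christol_factorization_general
    {R : Type*} [Ring R] [MetricSpace R]
    (ν : R → ℝ)
    (hdist : ∀ x y : R, dist x y = ν (x - y))
    (hna : ∀ x y : R, ν (x - y) ≤ max (ν x) (ν y))
    (hmul : ∀ x y : R, ν (x * y) ≤ ν x * ν y)
    (a b c : R) (ha : a ≠ 0) (hb : b ≠ 0)
    (U V W : AddSubgroup R)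
    (hUcomplete : IsComplete (U : Set R)) (hVcomplete : IsComplete (V : Set R))
    (hUV : ∀ u ∈ U, ∀ v ∈ V, u * v ∈ W)
    (hsurj : ∀ w ∈ W, ∃ u ∈ U, ∃ v ∈ V, a * v + u * b = w)
    (lam : ℝ) (hlam : 0 < lam)
    (hbound : ∀ u ∈ U, ∀ v ∈ V,
      lam * max (ν a * ν v) (ν b * ν u) ≤ ν (a * v + u * b))
    (habc : a * b - c ∈ W)
    (hsmall : ν (a * b - c) < lam ^ 2 * ν c) :
    ∃ x y : R,
      (x ∈ U ∧ y ∈ V ∧ c = (a + x) * (b + y) ∧ ν x < lam * ν a ∧ ν y < lam * ν b) ∧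
      (ν x ≤ lam⁻¹ * ν (a * b - c) / ν b ∧ ν y ≤ lam⁻¹ * ν (a * b - c) / ν a) ∧
      (∀ x' y' : R,
        (x' ∈ U ∧ y' ∈ V ∧ c = (a + x') * (b + y') ∧ ν x' < lam * ν a ∧ ν y' < lam * ν b) →
        x' = x ∧ y' = y) := by
  let _ : NormedRing R :=
    { ‹Ring R›, ‹MetricSpace R› with
      norm := ν
      dist_eq := fun x y => by rw [dist_comm, hdist, neg_add_eq_sub]
      norm_mul_le := hmul }
  have _ : IsUltrametricDist R := ⟨fun x y z => by
    have h := hna (x - y) (z - y)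
    rwa [sub_sub_sub_cancel_right, ← hdist, ← hdist, ← hdist, dist_comm z y] at h⟩
  have hε := norm_mul_sub_lt hsurj hlam hbound habc hsmall
  obtain ⟨x, hx, y, hy, hxy, hxb, hya⟩ :=
    exists_factorization hUcomplete hVcomplete hUV hsurj hlam ha hb hbound habc hε
  obtain ⟨hba, hab⟩ :=
    inv_mul_div_lt_of_lt_sq_mul hlam (norm_pos_iff.mpr ha) (norm_pos_iff.mpr hb) hε
  have hyb : ν y < lam * ν b := hya.trans_lt hab
  refine ⟨x, y, ⟨hx, hy, hxy, hxb.trans_lt hba, hyb⟩, ⟨hxb, hya⟩, ?_⟩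
  rintro x' y' ⟨hx', hy', hxy', hx'a, -⟩
  exact eq_and_eq_of_factorizations hlam ha hb hbound hx hy hx' hy' hxy hxy' hx'a hyb

/-- **Robba–Christol factorization (Hensel's lemma in noncommutative rings).**
Let `R` be a (not necessarily commutative) ring equipped with a nonarchimedean norm
`ν : R → ℝ` (so `ν (x - y) ≤ max (ν x) (ν y)`, `ν (x*y) ≤ ν x * ν y`, `ν 0 = 0`),
whose associated metric is `dist x y = ν (x - y)`.  Suppose the nonzero elements
`a, b, c ∈ R` and additive subgroups `U, V, W ⊆ R` satisfy:
(a) `U, V` are complete under the norm, and `U·V ⊆ W`;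
(b) the map `f(u,v) = a*v + u*b` surjects `U × V` onto `W`;
(c) there is `λ > 0` with `ν (a*v + u*b) ≥ λ * max (ν a * ν v) (ν b * ν u)`
    for all `u ∈ U`, `v ∈ V`;
(d) `a*b - c ∈ W` and `ν (a*b - c) < λ² * ν c`.
Then there is a unique pair `(x, y) ∈ U × V` with
`c = (a+x)*(b+y)`, `ν x < λ * ν a`, `ν y < λ * ν b`; and moreover this pair satisfies
`ν x ≤ λ⁻¹ * ν (a*b - c) / ν b` and `ν y ≤ λ⁻¹ * ν (a*b - c) / ν a`. -/
theorem robba_christol_factorization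
    {R : Type*} [Ring R] [MetricSpace R]
    (ν : R → ℝ)
    (hdist : ∀ x y : R, dist x y = ν (x - y))
    (hna : ∀ x y : R, ν (x - y) ≤ max (ν x) (ν y))
    (hmul : ∀ x y : R, ν (x * y) ≤ ν x * ν y)
    (hzero : ν 0 = 0)
    (a b c : R) (ha : a ≠ 0) (hb : b ≠ 0) (hc : c ≠ 0)
    (U V W : AddSubgroup R)
    (hUcomplete : IsComplete (U : Set R)) (hVcomplete : IsComplete (V : Set R))
    (hUV : ∀ u ∈ U, ∀ v ∈ V, u * v ∈ W)
    (hsurj : ∀ w ∈ W, ∃ u ∈ U, ∃ v ∈ V, a * v + u * b = w)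
    (lam : ℝ) (hlam : 0 < lam)
    (hbound : ∀ u ∈ U, ∀ v ∈ V,
      lam * max (ν a * ν v) (ν b * ν u) ≤ ν (a * v + u * b))
    (habc : a * b - c ∈ W)
    (hsmall : ν (a * b - c) < lam ^ 2 * ν c) :
    ∃ x y : R,
      (x ∈ U ∧ y ∈ V ∧ c = (a + x) * (b + y) ∧ ν x < lam * ν a ∧ ν y < lam * ν b) ∧
      (ν x ≤ lam⁻¹ * ν (a * b - c) / ν b ∧ ν y ≤ lam⁻¹ * ν (a * b - c) / ν a) ∧
      (∀ x' y' : R,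
        (x' ∈ U ∧ y' ∈ V ∧ c = (a + x') * (b + y') ∧ ν x' < lam * ν a ∧ ν y' < lam * ν b) →
        x' = x ∧ y' = y) :=
  robba_christol_factorization_general ν hdist hna hmul a b c ha hb U V W hUcomplete hVcomplete hUV
    hsurj lam hlam hbound habc hsmall
end

section
/- Let F be a complete nonarchimedean field of residual characteristic 0, r ∈ (0,1) not in the norm group of the completed algebraic closure of F. If g ∈ F⟨r/x, x/r⟩ satisfies |g − 1|_r < 1 for the r-Gauss norm, then g factors uniquely as g = g₁g₂ with g₁ ∈ 1 + x·F⟨x/r⟩, g₁ a unit of F⟨x/r⟩, g₂ a unit of F⟨r/x⟩, |g₁ − 1|_r < 1, and |g₂ − 1|_r < 1; in particular g is a unit in F⟨r/x, x/r⟩. -/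
/-! With respect to the Gauss norm, `C` is an ultrametric Banach ring, and truncating a Laurent
series to its positive powers of `x` extends by continuity to an additive projection `P` of norm
at most `1`. Writing `g = 1 + d`, the map `y ↦ d - P y * (y - P y)` contracts the ball of radius
`‖d‖` by the factor `‖d‖`; its fixed point `y` gives `g = (1 + P y) * (1 + (y - P y))`, and
geometric series invert both factors inside the closed subrings `F⟨x/r⟩` and `F⟨r/x⟩`.
For uniqueness, two factorizations yield an element of `(1 + x F⟨x/r⟩) ∩ F⟨r/x⟩`, which is `1`
because `P` fixes `x F⟨x/r⟩` and kills `F⟨r/x⟩`. -/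

open Filter Set

open scoped Pointwise

theorem AddMonoidHom.exists_extend_of_denseRange {α A B : Type*} [AddCommGroup α]
    [SeminormedAddCommGroup A] [NormedAddCommGroup B] [CompleteSpace B]
    (Λ : α →+ A) (hΛ : DenseRange Λ) (ψ : α →+ B) (hψ : ∀ a, ‖ψ a‖ ≤ ‖Λ a‖) :
    ∃ P : A →+ B, (∀ a, P (Λ a) = ψ a) ∧ ∀ y, ‖P y‖ ≤ ‖y‖ := by
  let _ : PseudoMetricSpace α := PseudoMetricSpace.induced Λ inferInstance
  have hΛu : IsUniformInducing Λ :=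
    (Isometry.of_dist_eq (f := Λ) fun _ _ => rfl).isUniformInducing
  have hψu : UniformContinuous ψ := by
    refine (LipschitzWith.of_dist_le_mul (K := 1) fun a b => ?_).uniformContinuous
    rw [NNReal.coe_one, one_mul, dist_eq_norm, ← map_sub]
    exact (hψ (a - b)).trans_eq (by rw [map_sub, ← dist_eq_norm]; rfl)
  set P := (hΛu.isDenseInducing hΛ).extend ψ
  have hPc : Continuous P := (uniformContinuous_uniformly_extend hΛu hΛ hψu).continuous
  have hPΛ : ∀ a, P (Λ a) = ψ a := uniformly_extend_of_ind hΛu hΛ hψu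
  refine ⟨{ toFun := P, map_zero' := ?_, map_add' := fun y z => ?_ }, hPΛ, fun y => ?_⟩
  · simpa using hPΛ 0
  · refine hΛ.induction_on₂ (p := fun y z => P (y + z) = P y + P z)
      (isClosed_eq (by fun_prop) (by fun_prop)) (fun a b => ?_) y z
    simp only [← map_add, hPΛ]
  · refine hΛ.induction_on (p := fun y => ‖P y‖ ≤ ‖y‖) y
      (isClosed_le (by fun_prop) (by fun_prop)) (fun a => ?_)
    rw [hPΛ]
    exact hψ a

theorem IsUltrametricDist.norm_sub_le_max {S : Type*} [SeminormedAddGroup S]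
    [IsUltrametricDist S] (x y : S) : ‖x - y‖ ≤ max ‖x‖ ‖y‖ := by
  simpa [sub_eq_add_neg] using norm_add_le_max x (-y)

section UltrametricFactorization

variable {A : Type*} [NormedRing A] [IsUltrametricDist A]

theorem norm_sub_map_le (P : A →+ A) (hP : ∀ y, ‖P y‖ ≤ ‖y‖) (y : A) : ‖y - P y‖ ≤ ‖y‖ :=
  (IsUltrametricDist.norm_sub_le_max _ _).trans (max_le le_rfl (hP y))

theorem exists_one_add_eq_mul_of_norm_lt_one [CompleteSpace A] (P : A →+ A)
    (hP : ∀ y, ‖P y‖ ≤ ‖y‖) {d : A} (hd : ‖d‖ < 1) :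
    ∃ y : A, ‖y‖ ≤ ‖d‖ ∧ 1 + d = (1 + P y) * (1 + (y - P y)) := by
  set T : A → A := fun y => d - P y * (y - P y)
  have hmul : ∀ {x x' : A} {c c' : ℝ}, ‖x‖ ≤ c → ‖x'‖ ≤ c' → 0 ≤ c → ‖x * x'‖ ≤ c * c' :=
    fun hx hx' hc => (norm_mul_le _ _).trans (mul_le_mul hx hx' (norm_nonneg _) hc)
  have hTB : MapsTo T (Metric.closedBall 0 ‖d‖) (Metric.closedBall 0 ‖d‖) := fun y hy => by
    rw [mem_closedBall_zero_iff] at hy ⊢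
    refine (IsUltrametricDist.norm_sub_le_max _ _).trans (max_le le_rfl ?_)
    calc ‖P y * (y - P y)‖ ≤ ‖d‖ * ‖d‖ :=
          hmul ((hP y).trans hy) ((norm_sub_map_le P hP y).trans hy) (norm_nonneg d)
      _ ≤ ‖d‖ := mul_le_of_le_one_left (norm_nonneg d) hd.le
  have hT : ContractingWith ‖d‖₊ (hTB.restrict T _ _) := by
    refine ⟨hd, LipschitzWith.of_dist_le_mul fun y z => ?_⟩
    have hy := mem_closedBall_zero_iff.1 y.2
    have hz := mem_closedBall_zero_iff.1 z.2
    have hyz : dist y z = ‖(z : A) - y‖ := by rw [dist_comm, Subtype.dist_eq, dist_eq_norm]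
    have hTyz : T y - T z = P z * ((z - y) - P (z - y)) + P (z - y) * (y - P y) := by
      simp only [T, map_sub]; noncomm_ring
    rw [Subtype.dist_eq, MapsTo.val_restrict_apply, MapsTo.val_restrict_apply, dist_eq_norm, hTyz,
      coe_nnnorm, hyz]
    refine (IsUltrametricDist.norm_add_le_max _ _).trans (max_le ?_ ?_)
    · exact hmul ((hP z).trans hz) (norm_sub_map_le P hP _) (norm_nonneg d)
    · rw [mul_comm ‖d‖]
      exact hmul (hP _) ((norm_sub_map_le P hP y).trans hy) (norm_nonneg _)
  obtain ⟨y, hyB, hy, -⟩ := hT.exists_fixedPoint' Metric.isClosed_closedBall.isComplete hTB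
    (Metric.mem_closedBall_self (norm_nonneg d)) (edist_ne_top _ _)
  refine ⟨y, mem_closedBall_zero_iff.1 hyB, ?_⟩
  rw [eq_add_of_sub_eq hy]
  noncomm_ring

end UltrametricFactorization

theorem Subring.exists_mul_eq_one_of_norm_lt_one {A : Type*} [NormedRing A]
    [HasSummableGeomSeries A] (S : Subring A) (hS : IsClosed (S : Set A)) {u : A} (hu : u ∈ S)
    (hu1 : ‖u‖ < 1) : ∃ w ∈ S, (1 + u) * w = 1 := by
  have hnu : ‖-u‖ < 1 := by rwa [norm_neg]
  refine ⟨∑' n, (-u) ^ n, hS.mem_of_tendsto (summable_geometric_of_norm_lt_one hnu).hasSum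
    (Eventually.of_forall fun _ => S.sum_mem fun n _ => S.pow_mem (S.neg_mem hu) n), ?_⟩
  simpa using mul_neg_geom_series (-u) hnu

section LaurentEval

variable {F C : Type*} [CommRing F] [NormedCommRing C] (fF : F →+* C) (X : Cˣ)

noncomputable def laurentEval : (ℤ →₀ F) →+ C :=
  Finsupp.liftAddHom fun i => (AddMonoidHom.mulRight ((X ^ i : Cˣ) : C)).comp fF.toAddMonoidHom

theorem laurentEval_apply (a : ℤ →₀ F) :
    laurentEval fF X a = a.sum fun i c => fF c * ((X ^ i : Cˣ) : C) :=
  Finsupp.liftAddHom_apply _ _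

theorem laurentEval_single_zero_one : laurentEval fF X (Finsupp.single 0 1) = 1 := by
  simp [laurentEval]

theorem laurentEval_mul (a b : ℤ →₀ F) :
    laurentEval fF X (AddMonoidAlgebra.ofCoeff a * .ofCoeff b).coeff =
      laurentEval fF X a * laurentEval fF X b :=
  map_mul (AddMonoidAlgebra.liftNCRingHom fF ((Units.coeHom C).comp (zpowersHom Cˣ X))
    fun _ _ => Commute.all _ _) _ _

/-- `F⟨x/r⟩`, `x F⟨x/r⟩` and `F⟨r/x⟩` are `laurentClosure` of `Ici 0`, `Ioi 0` and `Iic 0`. -/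
noncomputable def laurentClosure (s : Set ℤ) : AddSubgroup C :=
  ((Finsupp.supported F F s).toAddSubgroup.map (laurentEval fF X)).topologicalClosure

theorem closure_image_eq_laurentClosure {p : ℤ → Prop} {s : Set ℤ} (h : ∀ i, p i ↔ i ∉ s) :
    closure ((fun a : ℤ →₀ F => a.sum fun i c => fF c * ((X ^ i : Cˣ) : C)) ''
      {a | ∀ i, p i → a i = 0}) = laurentClosure fF X s := by
  simp only [laurentClosure, AddSubgroup.topologicalClosure_coe, AddSubgroup.coe_map,
    Submodule.coe_toAddSubgroup, ← laurentEval_apply, h]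
  congr 2
  ext a
  exact (Finsupp.mem_supported' F a).symm

theorem laurentEval_mem_laurentClosure {s : Set ℤ} {a : ℤ →₀ F}
    (ha : a ∈ Finsupp.supported F F s) : laurentEval fF X a ∈ laurentClosure fF X s :=
  AddSubgroup.le_topologicalClosure _ ⟨a, ha, rfl⟩

theorem laurentClosure_induction {s : Set ℤ} {p : C → Prop} (hp : IsClosed {y | p y})
    (h : ∀ a ∈ Finsupp.supported F F s, p (laurentEval fF X a)) {y : C}
    (hy : y ∈ laurentClosure fF X s) : p y :=
  closure_minimal (by rintro _ ⟨a, ha, rfl⟩; exact h a ha) hp hy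

theorem isClosed_laurentClosure (s : Set ℤ) : IsClosed (laurentClosure fF X s : Set C) :=
  AddSubgroup.isClosed_topologicalClosure _

theorem laurentClosure_mono {s t : Set ℤ} (hst : s ⊆ t) :
    laurentClosure fF X s ≤ laurentClosure fF X t :=
  AddSubgroup.topologicalClosure_mono
    (AddSubgroup.map_mono (Finsupp.supported_mono (M := F) (R := F) hst))

theorem mul_mem_laurentClosure {s t u : Set ℤ} (hstu : ∀ i ∈ s, ∀ j ∈ t, i + j ∈ u) {y z : C}
    (hy : y ∈ laurentClosure fF X s) (hz : z ∈ laurentClosure fF X t) :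
    y * z ∈ laurentClosure fF X u := by
  refine map_mem_closure₂ continuous_mul hy hz ?_
  rintro _ ⟨a, ha, rfl⟩ _ ⟨b, hb, rfl⟩
  refine ⟨_, (Finsupp.mem_supported F _).2 ?_, laurentEval_mul fF X a b⟩
  classical
  refine (Finset.coe_subset.2 (AddMonoidAlgebra.support_coeff_mul_subset _ _)).trans ?_
  rw [Finset.coe_add]
  exact (Set.add_subset_add ((Finsupp.mem_supported F _).1 ha)
    ((Finsupp.mem_supported F _).1 hb)).trans (Set.add_subset_iff.2 hstu)

noncomputable def laurentClosureSubring (s : Set ℤ) (hs0 : 0 ∈ s)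
    (hs : ∀ i ∈ s, ∀ j ∈ s, i + j ∈ s) : Subring C :=
  { laurentClosure fF X s with
    one_mem' := by
      rw [← laurentEval_single_zero_one fF X]
      exact laurentEval_mem_laurentClosure fF X (Finsupp.single_mem_supported F _ hs0)
    mul_mem' := mul_mem_laurentClosure fF X hs }

end LaurentEval

section GaussNorm

variable {F C : Type*} [CommRing F] [NormedCommRing C] {fF : F →+* C} {X : Cˣ} {ν : F → ℝ}
  {r : ℝ}

def HasGaussNorm (fF : F →+* C) (X : Cˣ) (ν : F → ℝ) (r : ℝ) : Prop :=
  ∀ a : ℤ →₀ F, ‖laurentEval fF X a‖ = ⨆ i : ℤ, ν (a i) * r ^ i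

theorem HasGaussNorm.le_norm (h : HasGaussNorm fF X ν r) (hν0 : ν 0 = 0) (a : ℤ →₀ F) (i : ℤ) :
    ν (a i) * r ^ i ≤ ‖laurentEval fF X a‖ := by
  rw [h]
  refine le_ciSup (f := fun j : ℤ => ν (a j) * r ^ j) (Set.Finite.bddAbove ?_) i
  refine ((a.support.finite_toSet.image fun i => ν (a i) * r ^ i).insert 0).subset ?_
  rintro _ ⟨j, rfl⟩
  by_cases hj : a j = 0
  · left
    simp [hj, hν0]
  · exact Or.inr ⟨j, Finsupp.mem_support_iff.2 hj, rfl⟩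

theorem HasGaussNorm.norm_le (h : HasGaussNorm fF X ν r) {a : ℤ →₀ F} {B : ℝ} (hB : 0 ≤ B)
    (hle : ∀ i, ν (a i) * r ^ i ≤ B) : ‖laurentEval fF X a‖ ≤ B :=
  (h a).trans_le (Real.iSup_le (ι := ℤ) hle hB)

theorem HasGaussNorm.norm_filter_le (h : HasGaussNorm fF X ν r) (hν0 : ν 0 = 0) (p : ℤ → Prop)
    [DecidablePred p] (a : ℤ →₀ F) : ‖laurentEval fF X (a.filter p)‖ ≤ ‖laurentEval fF X a‖ := by
  refine h.norm_le (norm_nonneg _) fun i => ?_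
  rw [Finsupp.filter_apply]
  split_ifs
  · exact h.le_norm hν0 a i
  · simp [hν0]

theorem HasGaussNorm.norm_add_le_max (h : HasGaussNorm fF X ν r) (hν0 : ν 0 = 0)
    (hνadd : ∀ x y : F, ν (x + y) ≤ max (ν x) (ν y)) (hr : 0 < r) (a b : ℤ →₀ F) :
    ‖laurentEval fF X a + laurentEval fF X b‖ ≤
      max ‖laurentEval fF X a‖ ‖laurentEval fF X b‖ := by
  rw [← map_add]
  refine h.norm_le (le_max_of_le_left (norm_nonneg _)) fun i => ?_
  have hri : 0 ≤ r ^ i := (zpow_pos hr i).le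
  calc ν ((a + b) i) * r ^ i ≤ max (ν (a i)) (ν (b i)) * r ^ i :=
        mul_le_mul_of_nonneg_right (hνadd _ _) hri
    _ = max (ν (a i) * r ^ i) (ν (b i) * r ^ i) := max_mul_of_nonneg _ _ hri
    _ ≤ _ := max_le_max (h.le_norm hν0 a i) (h.le_norm hν0 b i)

theorem HasGaussNorm.isUltrametricDist (h : HasGaussNorm fF X ν r) (hν0 : ν 0 = 0)
    (hνadd : ∀ x y : F, ν (x + y) ≤ max (ν x) (ν y)) (hr : 0 < r)
    (hdense : DenseRange (laurentEval fF X)) : IsUltrametricDist C :=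
  IsUltrametricDist.isUltrametricDist_of_forall_norm_add_le_max_norm fun y z =>
    hdense.induction_on₂ (p := fun y z => ‖y + z‖ ≤ max ‖y‖ ‖z‖)
      (isClosed_le (by fun_prop) (by fun_prop)) (h.norm_add_le_max hν0 hνadd hr) y z

theorem HasGaussNorm.exists_truncation [CompleteSpace C] (h : HasGaussNorm fF X ν r)
    (hν0 : ν 0 = 0) (hdense : DenseRange (laurentEval fF X)) (s : Set ℤ)
    [DecidablePred (· ∈ s)] :
    ∃ P : C →+ C, (∀ a, P (laurentEval fF X a) = laurentEval fF X (a.filter (· ∈ s))) ∧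
      ∀ y, ‖P y‖ ≤ ‖y‖ :=
  (laurentEval fF X).exists_extend_of_denseRange hdense
    ((laurentEval fF X).comp (Finsupp.filterAddHom (· ∈ s))) (h.norm_filter_le hν0 _)

end GaussNorm

section Truncation

variable {F C : Type*} [CommRing F] [NormedCommRing C] {fF : F →+* C} {X : Cˣ}
  {s : Set ℤ} [DecidablePred (· ∈ s)] {P : C →+ C}

theorem map_mem_laurentClosure (hdense : DenseRange (laurentEval fF X))
    (hPc : Continuous P)
    (hPΛ : ∀ a, P (laurentEval fF X a) = laurentEval fF X (a.filter (· ∈ s))) (y : C) :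
    P y ∈ laurentClosure fF X s := by
  refine hdense.induction_on (p := fun y => P y ∈ laurentClosure fF X s) y
    ((isClosed_laurentClosure fF X s).preimage hPc) fun a => ?_
  rw [hPΛ]
  exact laurentEval_mem_laurentClosure fF X
    ((Finsupp.mem_supported' F _).2 fun _ => Finsupp.filter_apply_neg (· ∈ s) a)

theorem sub_map_mem_laurentClosure_compl (hdense : DenseRange (laurentEval fF X))
    (hPc : Continuous P)
    (hPΛ : ∀ a, P (laurentEval fF X a) = laurentEval fF X (a.filter (· ∈ s))) (y : C) :
    y - P y ∈ laurentClosure fF X sᶜ := by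
  refine hdense.induction_on (p := fun y => y - P y ∈ laurentClosure fF X sᶜ) y
    ((isClosed_laurentClosure fF X sᶜ).preimage (by fun_prop)) fun a => ?_
  rw [hPΛ, ← map_sub, sub_eq_of_eq_add' (a.filter_add_filter_not (· ∈ s)).symm]
  exact laurentEval_mem_laurentClosure fF X ((Finsupp.mem_supported' F _).2 fun _ hi =>
    Finsupp.filter_apply_neg _ a (not_not_intro (Set.notMem_compl_iff.1 hi)))

theorem map_eq_self_of_mem_laurentClosure (hPc : Continuous P)
    (hPΛ : ∀ a, P (laurentEval fF X a) = laurentEval fF X (a.filter (· ∈ s))) {y : C}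
    (hy : y ∈ laurentClosure fF X s) : P y = y := by
  refine laurentClosure_induction fF X (isClosed_eq hPc continuous_id) (fun a ha => ?_) hy
  rw [hPΛ, (Finsupp.filter_eq_self_iff _ _).2 fun i hi => (Finsupp.mem_supported F a).1 ha
    (Finsupp.mem_support_iff.2 hi), id]

theorem map_eq_zero_of_mem_laurentClosure_compl (hPc : Continuous P)
    (hPΛ : ∀ a, P (laurentEval fF X a) = laurentEval fF X (a.filter (· ∈ s))) {y : C}
    (hy : y ∈ laurentClosure fF X sᶜ) : P y = 0 := by
  refine laurentClosure_induction fF X (isClosed_eq hPc continuous_const) (fun a ha => ?_) hy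
  rw [hPΛ, (Finsupp.filter_eq_zero_iff _ _).2 fun i hi => (Finsupp.mem_supported' F a).1 ha i
    (Set.notMem_compl_iff.2 hi), map_zero]

end Truncation

theorem eq_and_eq_of_mul_eq_mul {A : Type*} [CommRing A] {I : AddSubgroup A} {R₀ : Set A}
    {R₁ : Subring A} (hmul : ∀ x ∈ I, ∀ y ∈ R₀, x * y ∈ I) (hdisj : ∀ x ∈ I, x ∈ R₁ → x = 0)
    {g₁ g₂ q₁ q₂ h₁ k₂ : A} (hg₁ : g₁ - 1 ∈ I) (hq₁ : q₁ - 1 ∈ I) (hh₁ : h₁ ∈ R₀)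
    (hgh : g₁ * h₁ = 1) (hg₂ : g₂ ∈ R₁) (hk₂ : k₂ ∈ R₁) (hqk : q₂ * k₂ = 1)
    (h : g₁ * g₂ = q₁ * q₂) : q₁ = g₁ ∧ q₂ = g₂ := by
  have hw : q₁ * h₁ - 1 = g₂ * k₂ - 1 := by
    linear_combination -q₁ * h₁ * hqk - h₁ * k₂ * h + g₂ * k₂ * hgh
  have hw' : q₁ * h₁ - 1 = ((q₁ - 1) - (g₁ - 1)) * h₁ := by linear_combination hgh
  have hqh : q₁ * h₁ = 1 := sub_eq_zero.1 <| hdisj _ (hw' ▸ hmul _ (I.sub_mem hq₁ hg₁) _ hh₁)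
    (hw ▸ R₁.sub_mem (R₁.mul_mem hg₂ hk₂) R₁.one_mem)
  have hq₁ : q₁ = g₁ := by linear_combination g₁ * hqh - q₁ * hgh
  exact ⟨hq₁, by linear_combination -h₁ * h - h₁ * q₂ * hq₁ - (q₂ - g₂) * hgh⟩

section Factorization

variable {F C : Type*} [CommRing F] [NormedCommRing C] [CompleteSpace C] {fF : F →+* C}
  {X : Cˣ} {ν : F → ℝ} {r : ℝ}

theorem HasGaussNorm.eq_zero_of_mem_laurentClosure_of_mem_compl (h : HasGaussNorm fF X ν r)
    (hν0 : ν 0 = 0) (hdense : DenseRange (laurentEval fF X)) {s : Set ℤ} {y : C}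
    (hy : y ∈ laurentClosure fF X s) (hy' : y ∈ laurentClosure fF X sᶜ) : y = 0 := by
  classical
  obtain ⟨P, hPΛ, hP⟩ := h.exists_truncation hν0 hdense s
  have hPc : Continuous P := AddMonoidHomClass.continuous_of_bound P 1 (by simpa using hP)
  exact (map_eq_self_of_mem_laurentClosure hPc hPΛ hy).symm.trans
    (map_eq_zero_of_mem_laurentClosure_compl hPc hPΛ hy')

theorem HasGaussNorm.exists_factorization (h : HasGaussNorm fF X ν r) (hν0 : ν 0 = 0)
    (hνadd : ∀ x y : F, ν (x + y) ≤ max (ν x) (ν y)) (hr : 0 < r)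
    (hdense : DenseRange (laurentEval fF X)) {g : C} (hg : ‖g - 1‖ < 1) :
    ∃ g₁ g₂ : C, g₁ - 1 ∈ laurentClosure fF X (Ioi 0) ∧
      (∃ h₁ ∈ laurentClosure fF X (Ici 0), g₁ * h₁ = 1) ∧ g₂ ∈ laurentClosure fF X (Iic 0) ∧
      (∃ h₂ ∈ laurentClosure fF X (Iic 0), g₂ * h₂ = 1) ∧
      ‖g₁ - 1‖ < 1 ∧ ‖g₂ - 1‖ < 1 ∧ g = g₁ * g₂ := by
  have := h.isUltrametricDist hν0 hνadd hr hdense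
  obtain ⟨P, hPΛ, hP⟩ := h.exists_truncation hν0 hdense (Ioi 0)
  have hPc : Continuous P := AddMonoidHomClass.continuous_of_bound P 1 (by simpa using hP)
  obtain ⟨y, hy, hfac⟩ := exists_one_add_eq_mul_of_norm_lt_one P hP hg
  have hu : P y ∈ laurentClosure fF X (Ioi 0) := map_mem_laurentClosure hdense hPc hPΛ y
  have hv : y - P y ∈ laurentClosure fF X (Iic 0) := by
    simpa only [compl_Ioi] using sub_map_mem_laurentClosure_compl hdense hPc hPΛ y
  have hu1 : ‖P y‖ < 1 := ((hP y).trans hy).trans_lt hg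
  have hv1 : ‖y - P y‖ < 1 := ((norm_sub_map_le P hP y).trans hy).trans_lt hg
  let R₀ := laurentClosureSubring fF X (Ici 0) self_mem_Ici
    fun _ hi _ hj => mem_Ici.2 (add_nonneg hi hj)
  let R₁ := laurentClosureSubring fF X (Iic 0) self_mem_Iic
    fun _ hi _ hj => mem_Iic.2 (add_nonpos hi hj)
  refine ⟨1 + P y, 1 + (y - P y), by rwa [add_sub_cancel_left], ?_, R₁.add_mem R₁.one_mem hv,
    R₁.exists_mul_eq_one_of_norm_lt_one (isClosed_laurentClosure fF X _) hv hv1,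
    by rwa [add_sub_cancel_left], by rwa [add_sub_cancel_left], by rwa [add_sub_cancel] at hfac⟩
  exact R₀.exists_mul_eq_one_of_norm_lt_one (isClosed_laurentClosure fF X _)
    (laurentClosure_mono fF X Ioi_subset_Ici_self hu) hu1

theorem HasGaussNorm.eq_and_eq_of_mul_eq_mul (h : HasGaussNorm fF X ν r) (hν0 : ν 0 = 0)
    (hdense : DenseRange (laurentEval fF X)) {g₁ g₂ q₁ q₂ h₁ k₂ : C}
    (hg₁ : g₁ - 1 ∈ laurentClosure fF X (Ioi 0)) (hq₁ : q₁ - 1 ∈ laurentClosure fF X (Ioi 0))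
    (hh₁ : h₁ ∈ laurentClosure fF X (Ici 0)) (hgh : g₁ * h₁ = 1)
    (hg₂ : g₂ ∈ laurentClosure fF X (Iic 0)) (hk₂ : k₂ ∈ laurentClosure fF X (Iic 0))
    (hqk : q₂ * k₂ = 1) (hgq : g₁ * g₂ = q₁ * q₂) : q₁ = g₁ ∧ q₂ = g₂ :=
  _root_.eq_and_eq_of_mul_eq_mul
    (R₁ := laurentClosureSubring fF X (Iic 0) self_mem_Iic
      fun _ hi _ hj => mem_Iic.2 (add_nonpos hi hj))
    (fun _ hx _ hy => mul_mem_laurentClosure fF X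
      (fun _ hi _ hj => mem_Ioi.2 (add_pos_of_pos_of_nonneg hi hj)) hx hy)
    (fun _ hx hx' =>
      h.eq_zero_of_mem_laurentClosure_of_mem_compl hν0 hdense hx (by rwa [compl_Ioi]))
    hg₁ hq₁ hh₁ hgh hg₂ hk₂ hqk hgq

end Factorization

theorem gauss_norm_unit_factorization_general
    (F : Type) [Field F]
    (ν : F → ℝ)
    (hν0 : ∀ x : F, ν x = 0 ↔ x = 0)
    (hνadd : ∀ x y : F, ν (x + y) ≤ max (ν x) (ν y))
    (r : ℝ) (hr0 : 0 < r)
    (C : Type) [CommRing C] [MetricSpace C] [CompleteSpace C]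
    (νC : C → ℝ)
    (hdist : ∀ y z : C, dist y z = νC (y - z))
    (hνCmul : ∀ y z : C, νC (y * z) ≤ νC y * νC z)
    (fF : F →+* C)
    (X : Cˣ)
    (hGauss : ∀ a : ℤ →₀ F,
      νC (a.sum fun i c => fF c * ((X ^ i : Cˣ) : C)) = ⨆ i : ℤ, ν (a i) * r ^ i)
    (hdense : DenseRange fun a : ℤ →₀ F =>
      a.sum fun i c => fF c * ((X ^ i : Cˣ) : C))
    (g : C) (hg : νC (g - 1) < 1) :
    (∃! p : C × C,
      (p.1 - 1 ∈ closure ((fun a : ℤ →₀ F => a.sum fun i c => fF c * ((X ^ i : Cˣ) : C)) ''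
          {a | ∀ i : ℤ, i ≤ 0 → a i = 0}) ∧
        (∃ h₁ ∈ closure ((fun a : ℤ →₀ F => a.sum fun i c => fF c * ((X ^ i : Cˣ) : C)) ''
          {a | ∀ i : ℤ, i < 0 → a i = 0}), p.1 * h₁ = 1) ∧
        p.2 ∈ closure ((fun a : ℤ →₀ F => a.sum fun i c => fF c * ((X ^ i : Cˣ) : C)) ''
          {a | ∀ i : ℤ, 0 < i → a i = 0}) ∧
        (∃ h₂ ∈ closure ((fun a : ℤ →₀ F => a.sum fun i c => fF c * ((X ^ i : Cˣ) : C)) ''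
          {a | ∀ i : ℤ, 0 < i → a i = 0}), p.2 * h₂ = 1) ∧
        νC (p.1 - 1) < 1 ∧ νC (p.2 - 1) < 1 ∧ g = p.1 * p.2)) ∧
    IsUnit g := by
  let _ : NormedCommRing C :=
    { norm := νC, norm_mul_le := hνCmul, mul_comm := mul_comm
      dist_eq := fun y z => by rw [dist_comm, hdist, neg_add_eq_sub] }
  have hΛ : HasGaussNorm fF X ν r := hGauss
  have hν00 : ν 0 = 0 := (hν0 0).2 rfl
  rw [closure_image_eq_laurentClosure fF X (s := Ioi 0) fun _ => not_lt.symm,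
    closure_image_eq_laurentClosure fF X (s := Ici 0) fun _ => not_le.symm,
    closure_image_eq_laurentClosure fF X (s := Iic 0) fun _ => not_le.symm]
  obtain ⟨g₁, g₂, hg₁, ⟨h₁, hh₁, hgh₁⟩, hg₂, ⟨h₂, hh₂, hgh₂⟩, hn₁, hn₂, rfl⟩ :=
    hΛ.exists_factorization hν00 hνadd hr0 hdense hg
  refine ⟨⟨(g₁, g₂), ⟨hg₁, ⟨h₁, hh₁, hgh₁⟩, hg₂, ⟨h₂, hh₂, hgh₂⟩, hn₁, hn₂, rfl⟩, ?_⟩,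
    (IsUnit.of_mul_eq_one h₁ hgh₁).mul (IsUnit.of_mul_eq_one h₂ hgh₂)⟩
  rintro ⟨q₁, q₂⟩ ⟨hq₁, -, -, ⟨k₂, hk₂, hqk⟩, -, -, hgq⟩
  obtain ⟨rfl, rfl⟩ := hΛ.eq_and_eq_of_mul_eq_mul hν00 hdense hg₁ hq₁ hh₁ hgh₁ hg₂ hk₂ hqk hgq
  rfl

/-- **Units congruent to 1 factor in `F⟨r/x, x/r⟩` (irrational radius).**
Let `F` be a field with a nonarchimedean absolute value `ν` of residual
characteristic `0`, and let `r ∈ (0,1)` lie outside the norm group `|ℂ_F^×|` of the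
completed algebraic closure of `F` (equivalently, no positive power of `r` is the
absolute value of a nonzero element of `F`).  Let `C = F⟨r/x, x/r⟩` be the
completion of `F[x, x⁻¹]` under the `r`-Gauss norm `ν_C` (encoded abstractly: a
complete normed commutative ring in which the Laurent "polynomials"
`Λ a = ∑ᵢ aᵢ Xᵢ` are dense and have norm `supᵢ ν(aᵢ) rᵢ`); inside it, `F⟨x/r⟩`
(resp. `F⟨r/x⟩`) is the closure of the polynomials in `X` (resp. `X⁻¹`), and
`x·F⟨x/r⟩` the closure of those with only positive powers of `X`.  If `g ∈ C`
satisfies `ν_C (g - 1) < 1`, then `g` factors uniquely as `g = g₁ g₂` with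
`g₁ ∈ 1 + x·F⟨x/r⟩` a unit of `F⟨x/r⟩`, `g₂` a unit of `F⟨r/x⟩`,
`ν_C (g₁ - 1) < 1` and `ν_C (g₂ - 1) < 1`; in particular `g` is a unit of `C`. -/
theorem gauss_norm_unit_factorization
    (F : Type) [Field F] [CharZero F]
    (ν : F → ℝ)
    (hν0 : ∀ x : F, ν x = 0 ↔ x = 0)
    (hνmul : ∀ x y : F, ν (x * y) = ν x * ν y)
    (hνadd : ∀ x y : F, ν (x + y) ≤ max (ν x) (ν y))
    (hres : ∀ n : ℕ, n ≠ 0 → ν (n : F) = 1)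
    (r : ℝ) (hr0 : 0 < r) (hr1 : r < 1)
    (hirr : ∀ (n : ℕ) (a : F), 0 < n → a ≠ 0 → r ^ n ≠ ν a)
    (C : Type) [CommRing C] [MetricSpace C] [CompleteSpace C]
    (νC : C → ℝ)
    (hdist : ∀ y z : C, dist y z = νC (y - z))
    (hνCmul : ∀ y z : C, νC (y * z) ≤ νC y * νC z)
    (fF : F →+* C) (hfF : ∀ a : F, νC (fF a) = ν a)
    (X : Cˣ)
    (hGauss : ∀ a : ℤ →₀ F,
      νC (a.sum fun i c => fF c * ((X ^ i : Cˣ) : C)) = ⨆ i : ℤ, ν (a i) * r ^ i)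
    (hdense : DenseRange fun a : ℤ →₀ F =>
      a.sum fun i c => fF c * ((X ^ i : Cˣ) : C))
    (g : C) (hg : νC (g - 1) < 1) :
    (∃! p : C × C,
      (p.1 - 1 ∈ closure ((fun a : ℤ →₀ F => a.sum fun i c => fF c * ((X ^ i : Cˣ) : C)) ''
          {a | ∀ i : ℤ, i ≤ 0 → a i = 0}) ∧
        (∃ h₁ ∈ closure ((fun a : ℤ →₀ F => a.sum fun i c => fF c * ((X ^ i : Cˣ) : C)) ''
          {a | ∀ i : ℤ, i < 0 → a i = 0}), p.1 * h₁ = 1) ∧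
        p.2 ∈ closure ((fun a : ℤ →₀ F => a.sum fun i c => fF c * ((X ^ i : Cˣ) : C)) ''
          {a | ∀ i : ℤ, 0 < i → a i = 0}) ∧
        (∃ h₂ ∈ closure ((fun a : ℤ →₀ F => a.sum fun i c => fF c * ((X ^ i : Cˣ) : C)) ''
          {a | ∀ i : ℤ, 0 < i → a i = 0}), p.2 * h₂ = 1) ∧
        νC (p.1 - 1) < 1 ∧ νC (p.2 - 1) < 1 ∧ g = p.1 * p.2)) ∧
    IsUnit g :=
  gauss_norm_unit_factorization_general F ν hν0 hνadd r hr0 C νC hdist hνCmul fF X hGauss hdense g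
    hg
end

section
/- (Perron-type lemma) Let r ≤ s be positive integers, and let c₁,…,c_s be positive real numbers such that c₁,…,c_r form a basis of the ℚ-vector space spanned by c₁,…,c_s. Then there exists A ∈ GL_s(ℤ) such that all entries of A⁻¹ are nonnegative, Σ_j A_{ij} c_j > 0 for i = 1,…,r, and Σ_j A_{ij} c_j = 0 for i = r+1,…,s. -/
/-!
Write `c = ∑ tᵢ bᵢ` with `tᵢ > 0` and integer vectors `bᵢ` (clearing the denominators of the
expansion of each `c_j` in the basis `c₁, …, c_r`). For large `N` and `a = ⌊N t⌋`, the vectors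
`∑ aₖ bₖ + r bᵢ` are nonnegative integer vectors that still have `c` in their open cone.

While the lattice `L` spanned by the current generators `vᵢ` is not saturated in `ℤˢ`, some integer
vector is `w = ∑ μᵢ vᵢ` with `0 ≤ μᵢ < 1`, `μ ≠ 0`; exchange `w` for the generator `vᵢ` minimising
`tᵢ / μᵢ`. The new generators are nonnegative and `c` stays in their open cone: a vanishing
coefficient would put the `c_j` in a `ℚ`-span of fewer than `r` reals. The Gram determinant of the
generators gets multiplied by `μᵢ² < 1`, so this terminates.

Once `L` is saturated, `ℤˢ ⧸ L` is free, and a basis of `L` extends to a basis of `ℤˢ`; the added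
vectors may be shifted by multiples of `∑ vᵢ ∈ L`, which is positive, to make them nonnegative.
The matrix `B` with these columns satisfies `c = B (t, 0)`, and `A = B⁻¹`.
-/

open Matrix Module Submodule Set

variable {m n : Type*}

theorem intCast_comp_vecMul [Fintype m] {R : Type*} [Ring R] (g : m → ℤ) (M : Matrix m n ℤ) :
    ((↑) ∘ (g ᵥ* M) : n → R) = ((↑) ∘ g) ᵥ* M.map (↑) :=
  funext (RingHom.map_vecMul (Int.castRingHom R) M g)

theorem linearIndependent_of_eq_vecMul [Fintype m] {c : n → ℝ}
    (hrank : Fintype.card m ≤ finrank ℚ (span ℚ (range c)))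
    {M : Matrix m n ℤ} {t : m → ℝ} (hc : c = t ᵥ* M.map (↑)) :
    LinearIndependent ℚ t := by
  have : Module.Finite ℚ (span ℚ (range t)) := FiniteDimensional.span_of_finite ℚ (finite_range t)
  have hle : span ℚ (range c) ≤ span ℚ (range t) := by
    rw [span_le, range_subset_iff, hc]
    intro j
    refine Submodule.sum_mem _ fun i _ => ?_
    rw [mul_comm]
    exact zsmul_eq_mul (t i) (M i j) ▸ zsmul_mem (subset_span (mem_range_self i)) _
  rw [linearIndependent_iff_card_eq_finrank_span]
  exact le_antisymm (hrank.trans (finrank_mono hle)) (finrank_range_le_card t)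

theorem linearIndependent_rows_of_eq_vecMul [Fintype m] {c : n → ℝ}
    (hrank : Fintype.card m ≤ finrank ℚ (span ℚ (range c)))
    {M : Matrix m n ℤ} {t : m → ℝ} (hc : c = t ᵥ* M.map (↑)) :
    LinearIndependent ℤ M.row := by
  rw [Fintype.linearIndependent_iff]
  intro g hg i₀
  by_contra hi₀
  have hgM : ((↑) ∘ g : m → ℝ) ᵥ* M.map (↑) = 0 := by
    rw [← intCast_comp_vecMul, vecMul_eq_sum]
    simp only [row_apply'] at hg
    rw [hg]
    exact funext fun _ => Int.cast_zero
  have hc' : c = (t - (t i₀ / g i₀) • ((↑) ∘ g)) ᵥ* M.map (↑) := by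
    rw [sub_vecMul, smul_vecMul, hgM, smul_zero, sub_zero, hc]
  refine (linearIndependent_of_eq_vecMul hrank hc').ne_zero i₀ ?_
  simp [hi₀]

theorem det_mul_transpose_ne_zero [Fintype m] [DecidableEq m] [Fintype n] {R : Type*}
    [CommRing R] [LinearOrder R] [IsStrictOrderedRing R] {M : Matrix m n R}
    (hM : LinearIndependent R M.row) : (M * Mᵀ).det ≠ 0 := by
  intro h
  obtain ⟨g, hg0, hg⟩ := exists_vecMul_eq_zero_iff.mpr h
  have hgM : g ᵥ* M = 0 := by
    rw [← dotProduct_self_eq_zero]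
    calc (g ᵥ* M) ⬝ᵥ (g ᵥ* M) = g ⬝ᵥ (M *ᵥ (g ᵥ* M)) := (dotProduct_mulVec _ _ _).symm
      _ = (g ᵥ* (M * Mᵀ)) ⬝ᵥ g := by
        rw [← vecMul_vecMul, vecMul_transpose, dotProduct_comm]
      _ = 0 := by rw [hg, zero_dotProduct]
  exact hg0 (vecMul_injective_iff.mpr hM (hgM.trans (zero_vecMul M).symm))

theorem exists_intCast_eq_natCast_mul {ι : Type*} [Fintype ι] (q : ι → ℚ) :
    ∃ (D : ℕ) (z : ι → ℤ), 0 < D ∧ ∀ i, (z i : ℚ) = D * q i := by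
  have hdvd : ∀ i, (q i).den ∣ ∏ k, (q k).den := fun i =>
    Finset.dvd_prod_of_mem _ (Finset.mem_univ i)
  refine ⟨∏ k, (q k).den, fun i => (q i).num * ((∏ k, (q k).den) / (q i).den : ℕ),
    Finset.prod_pos fun k _ => (q k).den_pos, fun i => ?_⟩
  rw [Int.cast_mul, Int.cast_natCast,
    Nat.cast_div (hdvd i) (Nat.cast_ne_zero.mpr (q i).den_ne_zero), ← Rat.mul_den_eq_num]
  field_simp

theorem exists_eq_vecMul_of_mem_span [Fintype m] [Fintype n] {c : n → ℝ} {g : m → ℝ}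
    (h : ∀ j, c j ∈ span ℚ (range g)) :
    ∃ (D : ℕ) (B : Matrix m n ℤ), 0 < D ∧ c = (fun i => g i / D) ᵥ* B.map (↑) := by
  choose q hq using fun j => (mem_span_range_iff_exists_fun ℚ).mp (h j)
  obtain ⟨D, z, hD, hz⟩ := exists_intCast_eq_natCast_mul fun p : m × n => q p.2 p.1
  refine ⟨D, Matrix.of fun i j => z (i, j), hD, funext fun j => ?_⟩
  rw [← hq j]
  refine Finset.sum_congr rfl fun i _ => ?_
  have hzR : (z (i, j) : ℝ) = D * q j i := by exact_mod_cast hz (i, j)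
  show q j i • g i = g i / D * (z (i, j) : ℝ)
  rw [hzR, Rat.smul_def]
  field_simp

theorem vecMul_of_vecMul_add_smul [Fintype m] {K : Type*} [Field K] (t a : m → K)
    (B : Matrix m n K) {R T : K} (hR : R ≠ 0) (hT : T * (R + ∑ k, a k) = ∑ k, t k) :
    (fun k => (t k - T * a k) / R) ᵥ* of (fun i => a ᵥ* B + R • B i) = t ᵥ* B := by
  have hsum : ∑ k, (t k - T * a k) / R = T := by
    rw [← Finset.sum_div, Finset.sum_sub_distrib, ← Finset.mul_sum, div_eq_iff hR, ← hT]
    ring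
  ext j
  calc ∑ i, (t i - T * a i) / R * (a ᵥ* B + R • B i) j
      = (∑ i, (t i - T * a i) / R) * (a ᵥ* B) j + ∑ i, (t i - T * a i) * B i j := by
        rw [Finset.sum_mul, ← Finset.sum_add_distrib]
        refine Finset.sum_congr rfl fun i _ => ?_
        simp only [Pi.add_apply, Pi.smul_apply, smul_eq_mul]
        field_simp
    _ = ∑ i, t i * B i j := by
        rw [hsum, vecMul, dotProduct, Finset.mul_sum, ← Finset.sum_add_distrib]
        exact Finset.sum_congr rfl fun i _ => by ring

theorem sub_le_floor_vecMul [Fintype m] (t : m → ℝ) (B : Matrix m n ℤ) (x : ℝ) (j : n) :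
    x * (t ᵥ* B.map (↑)) j - ∑ k, |(B k j : ℝ)| ≤ (((fun k => ⌊x * t k⌋) ᵥ* B) j : ℝ) := by
  have h := congrFun (intCast_comp_vecMul (R := ℝ) (fun k => ⌊x * t k⌋) B) j
  rw [Function.comp_apply] at h
  rw [sub_le_comm, h]
  simp only [vecMul, dotProduct, map_apply, Function.comp_apply, Finset.mul_sum,
    ← Finset.sum_sub_distrib]
  refine Finset.sum_le_sum fun k _ => ?_
  have hk₀ : 0 ≤ x * t k - ⌊x * t k⌋ := sub_nonneg.mpr (Int.floor_le _)
  have hk₁ : x * t k - ⌊x * t k⌋ ≤ 1 := (sub_lt_comm.mp (Int.sub_one_lt_floor _)).le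
  calc x * (t k * B k j) - ⌊x * t k⌋ * B k j = (x * t k - ⌊x * t k⌋) * B k j := by ring
    _ ≤ (x * t k - ⌊x * t k⌋) * |(B k j : ℝ)| := mul_le_mul_of_nonneg_left (le_abs_self _) hk₀
    _ ≤ |(B k j : ℝ)| := mul_le_of_le_one_left (abs_nonneg _) hk₁

theorem sum_mul_floor_mul_lt [Fintype m] [Nonempty m] {t : m → ℝ} (ht : ∀ k, 0 < t k) (x : ℝ)
    (k : m) : (∑ i, t i) * ⌊x * t k⌋ < t k * (Fintype.card m + ∑ i, (⌊x * t i⌋ : ℝ)) := by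
  have hsum : x * ∑ i, t i - Fintype.card m < ∑ i, (⌊x * t i⌋ : ℝ) := by
    have := Finset.sum_lt_sum_of_nonempty Finset.univ_nonempty fun i _ =>
      Int.sub_one_lt_floor (x * t i)
    simpa [Finset.mul_sum, Finset.sum_sub_distrib] using this
  have h₁ := mul_lt_mul_of_pos_left hsum (ht k)
  have h₂ := mul_le_mul_of_nonneg_left (Int.floor_le (x * t k))
    (Finset.sum_nonneg (s := Finset.univ) fun i _ => (ht i).le)
  nlinarith

theorem exists_nonneg_eq_vecMul [Fintype m] [Fintype n] {c : n → ℝ} (hc : ∀ j, 0 < c j)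
    {B : Matrix m n ℤ} {t : m → ℝ} (ht : ∀ i, 0 < t i) (hcB : c = t ᵥ* B.map (↑)) :
    ∃ (M : Matrix m n ℤ) (t' : m → ℝ), (∀ i j, 0 ≤ M i j) ∧ (∀ i, 0 < t' i) ∧
      c = t' ᵥ* M.map (↑) := by
  rcases isEmpty_or_nonempty m with hm | hm
  · exact ⟨B, t, fun i => isEmptyElim i, ht, hcB⟩
  set R : ℝ := (Fintype.card m : ℝ)
  have hR : 0 < R := Nat.cast_pos.mpr Fintype.card_pos
  obtain ⟨N, hN⟩ : ∃ N : ℕ, ∀ j, (1 + R) * ∑ k, |(B k j : ℝ)| ≤ N * c j :=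
    (Filter.eventually_all.2 fun j =>
      (tendsto_natCast_atTop_atTop.atTop_mul_const (hc j)).eventually_ge_atTop _).exists
  set a : m → ℤ := fun k => ⌊N * t k⌋
  have hden : 0 < R + ∑ k, (a k : ℝ) := add_pos_of_pos_of_nonneg hR <|
    Finset.sum_nonneg fun k _ =>
      Int.cast_nonneg (Int.floor_nonneg.mpr (mul_nonneg N.cast_nonneg (ht k).le))
  set T : ℝ := (∑ k, t k) / (R + ∑ k, (a k : ℝ))
  have hT : T * (R + ∑ k, (a k : ℝ)) = ∑ k, t k := div_mul_cancel₀ _ hden.ne'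
  refine ⟨of fun i => a ᵥ* B + Fintype.card m • B i, fun k => (t k - T * a k) / R,
    fun i j => ?_, fun k => div_pos ?_ hR, ?_⟩
  · have hB : -∑ k, |(B k j : ℝ)| ≤ B i j := (neg_le_neg (Finset.single_le_sum
      (f := fun k => |(B k j : ℝ)|) (fun k _ => abs_nonneg _) (Finset.mem_univ i))).trans
      (neg_abs_le _)
    have := sub_le_floor_vecMul t B N j
    rw [← hcB] at this
    rw [of_apply, Pi.add_apply, Pi.smul_apply, nsmul_eq_mul]
    exact_mod_cast (show (0 : ℝ) ≤ (((a ᵥ* B) j + Fintype.card m * B i j : ℤ) : ℝ) by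
      push_cast
      nlinarith [hN j, mul_le_mul_of_nonneg_left hB hR.le])
  · rw [sub_pos, div_mul_eq_mul_div, div_lt_iff₀ hden]
    exact sum_mul_floor_mul_lt ht N k
  · rw [hcB, ← vecMul_of_vecMul_add_smul t ((↑) ∘ a) (B.map (↑)) hR.ne' hT,
      ← intCast_comp_vecMul]
    congr 1
    ext i j
    simp [R]

theorem vecMul_updateRow [Fintype m] [DecidableEq m] {R : Type*} [CommRing R] (x : m → R)
    (A : Matrix m n R) (i : m) (b : n → R) : x ᵥ* A.updateRow i b = x ᵥ* A + x i • (b - A i) := by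
  ext j
  simp only [vecMul, dotProduct, updateRow_apply, Pi.add_apply, Pi.smul_apply, Pi.sub_apply,
    smul_eq_mul, mul_ite]
  have key : ∀ k, (if k = i then x k * b j else x k * A k j) =
      x k * A k j + if k = i then x i * (b j - A i j) else 0 := by
    intro k
    split_ifs with h
    · subst h; ring
    · ring
  simp_rw [key, Finset.sum_add_distrib, Finset.sum_ite_eq', Finset.mem_univ, if_true]

theorem det_mul_transpose_updateRow_vecMul [Fintype m] [DecidableEq m] [Fintype n] {R : Type*}
    [CommRing R] (M : Matrix m n R) (i : m) (μ : m → R) :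
    (M.updateRow i (μ ᵥ* M) * (M.updateRow i (μ ᵥ* M))ᵀ).det = μ i ^ 2 * (M * Mᵀ).det := by
  have hE : M.updateRow i (μ ᵥ* M) = (1 : Matrix m m R).updateRow i μ * M := by
    rw [updateRow_mul, Matrix.one_mul]
  have hdet : ((1 : Matrix m m R).updateRow i μ).det = μ i := by
    simpa [← vecMul_eq_sum] using det_updateRow_sum (1 : Matrix m m R) i μ
  rw [hE, transpose_mul, Matrix.mul_assoc, ← Matrix.mul_assoc M, det_mul, det_mul, det_transpose,
    hdet]
  ring

theorem exists_nonneg_eq_vecMul_updateRow [Fintype m] [DecidableEq m] {c : n → ℝ}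
    {M : Matrix m n ℤ} {t : m → ℝ} (ht : ∀ i, 0 ≤ t i) (hc : c = t ᵥ* M.map (↑)) {w : n → ℤ}
    {μ : m → ℝ} (hμ : 0 ≤ μ) (hμ₀ : μ ≠ 0) (hw : (↑) ∘ w = μ ᵥ* M.map (↑)) :
    ∃ i t', 0 ≤ t' ∧ c = t' ᵥ* (M.updateRow i w).map (↑) := by
  have hne : (Finset.univ.filter (0 < μ ·)).Nonempty := by
    obtain ⟨i, hi⟩ := Function.ne_iff.mp hμ₀
    exact ⟨i, Finset.mem_filter.mpr ⟨Finset.mem_univ i, (hμ i).lt_of_ne' hi⟩⟩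
  obtain ⟨i, hi, hmin⟩ := Finset.exists_min_image _ (fun k => t k / μ k) hne
  have hμi : 0 < μ i := (Finset.mem_filter.mp hi).2
  set s := t i / μ i
  have hsμ : s * μ i = t i := div_mul_cancel₀ _ hμi.ne'
  refine ⟨i, t - s • μ + Pi.single i s, fun k => ?_, ?_⟩
  · rcases eq_or_ne k i with rfl | hki
    · simpa [hsμ] using div_nonneg (ht k) hμi.le
    · simp only [Pi.add_apply, Pi.sub_apply, Pi.smul_apply, smul_eq_mul, Pi.single_eq_of_ne hki,
        add_zero, Pi.zero_apply, sub_nonneg]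
      rcases (hμ k).lt_or_eq with hk | hk
      · exact (le_div_iff₀ hk).mp (hmin k (Finset.mem_filter.mpr ⟨Finset.mem_univ k, hk⟩))
      · simp [← hk, ht k]
  · rw [map_updateRow, vecMul_updateRow, hw, add_vecMul, sub_vecMul, smul_vecMul, single_vecMul,
      hc]
    simp only [Pi.add_apply, Pi.sub_apply, Pi.smul_apply, smul_eq_mul, Pi.single_eq_same, hsμ,
      sub_self, zero_add, row_apply', smul_sub]
    abel

theorem natAbs_det_mul_transpose_updateRow_lt [Fintype m] [DecidableEq m] [Fintype n]
    {M : Matrix m n ℤ} (hM : (M * Mᵀ).det ≠ 0) {w : n → ℤ} {μ : m → ℝ}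
    (hw : (↑) ∘ w = μ ᵥ* M.map (↑)) {i : m} (hμ : |μ i| < 1) :
    (M.updateRow i w * (M.updateRow i w)ᵀ).det.natAbs < (M * Mᵀ).det.natAbs := by
  have hcast : ∀ A : Matrix m n ℤ,
      (((A * Aᵀ).det : ℤ) : ℝ) = (A.map ((↑) : ℤ → ℝ) * (A.map ((↑) : ℤ → ℝ))ᵀ).det := by
    intro A
    rw [Int.cast_det, ← transpose_map]
    congr 1
    exact Matrix.map_mul (f := Int.castRingHom ℝ)
  have key : (((M.updateRow i w * (M.updateRow i w)ᵀ).det : ℤ) : ℝ) =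
      μ i ^ 2 * ((M * Mᵀ).det : ℝ) := by
    rw [hcast, hcast, map_updateRow, hw, det_mul_transpose_updateRow_vecMul]
  have hG : ((M * Mᵀ).det : ℝ) ≠ 0 := by exact_mod_cast hM
  rw [Int.natAbs_lt_iff_sq_lt, ← @Int.cast_lt ℝ, Int.cast_pow, Int.cast_pow, key, mul_pow]
  have hμ4 : (μ i ^ 2) ^ 2 < 1 :=
    pow_lt_one₀ (sq_nonneg _) ((sq_lt_one_iff_abs_lt_one _).mpr hμ) two_ne_zero
  exact mul_lt_of_lt_one_left (by positivity) hμ4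

theorem exists_fract_vecMul_of_not_isTorsionFree [Fintype m] {M : Matrix m n ℤ}
    (h : ¬ IsTorsionFree ℤ ((n → ℤ) ⧸ span ℤ (range M.row))) :
    ∃ (w : n → ℤ) (μ : m → ℝ), 0 ≤ μ ∧ μ ≠ 0 ∧ (∀ i, μ i < 1) ∧ (↑) ∘ w = μ ᵥ* M.map (↑) := by
  simp only [isTorsionFree_iff_smul_eq_zero, not_forall, not_or] at h
  obtain ⟨z, q, hzq, hz, hq⟩ := h
  obtain ⟨x, rfl⟩ := Submodule.Quotient.mk_surjective _ q
  rw [← Submodule.Quotient.mk_smul, Submodule.Quotient.mk_eq_zero, ← range_vecMulLinear] at hzq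
  obtain ⟨g, hg⟩ := hzq
  have hgx : ((↑) ∘ g : m → ℝ) ᵥ* M.map (↑) = (z : ℝ) • ((↑) ∘ x) := by
    rw [← intCast_comp_vecMul]
    ext j
    rw [Function.comp_apply, show (g ᵥ* M) j = z * x j from congrFun hg j]
    simp
  set μ : m → ℝ := (z : ℝ)⁻¹ • ((↑) ∘ g)
  have hx : ((↑) ∘ x : n → ℝ) = μ ᵥ* M.map (↑) := by
    rw [smul_vecMul, hgx, smul_smul, inv_mul_cancel₀ (Int.cast_ne_zero.mpr hz), one_smul]
  have hfloor : ((↑) ∘ (x - (fun i => ⌊μ i⌋) ᵥ* M) : n → ℝ) = (Int.fract ∘ μ) ᵥ* M.map (↑) := by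
    rw [show Int.fract ∘ μ = μ - (↑) ∘ fun i => ⌊μ i⌋ from
      funext fun i => (Int.self_sub_floor (μ i)).symm, sub_vecMul, ← hx, ← intCast_comp_vecMul]
    ext j
    simp
  refine ⟨_, _, fun i => Int.fract_nonneg _, fun h0 => hq ?_, fun i => Int.fract_lt_one _, hfloor⟩
  rw [Submodule.Quotient.mk_eq_zero, ← range_vecMulLinear]
  have hzero : ((↑) ∘ (x - (fun i => ⌊μ i⌋) ᵥ* M) : n → ℝ) = 0 := by
    rw [hfloor, show Int.fract ∘ μ = 0 from h0, zero_vecMul]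
  refine ⟨fun i => ⌊μ i⌋, (sub_eq_zero.mp (funext fun j => ?_)).symm⟩
  have hj := congrFun hzero j
  simp only [Function.comp_apply, Pi.sub_apply, Pi.zero_apply] at hj
  exact_mod_cast hj

theorem exists_isTorsionFree_of_eq_vecMul [Fintype m] [DecidableEq m] [Fintype n] {c : n → ℝ}
    (hrank : Fintype.card m ≤ finrank ℚ (span ℚ (range c))) (M : Matrix m n ℤ) (t : m → ℝ)
    (hM : ∀ i j, 0 ≤ M i j) (ht : ∀ i, 0 < t i) (hc : c = t ᵥ* M.map (↑)) :
    ∃ (M' : Matrix m n ℤ) (t' : m → ℝ), (∀ i j, 0 ≤ M' i j) ∧ (∀ i, 0 < t' i) ∧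
      c = t' ᵥ* M'.map (↑) ∧ IsTorsionFree ℤ ((n → ℤ) ⧸ span ℤ (range M'.row)) := by
  by_cases htf : IsTorsionFree ℤ ((n → ℤ) ⧸ span ℤ (range M.row))
  · exact ⟨M, t, hM, ht, hc, htf⟩
  obtain ⟨w, μ, hμ, hμ₀, hμ₁, hw⟩ := exists_fract_vecMul_of_not_isTorsionFree htf
  obtain ⟨i, t', ht', hc'⟩ :=
    exists_nonneg_eq_vecMul_updateRow (fun i => (ht i).le) hc hμ hμ₀ hw
  have hw₀ : ∀ j, 0 ≤ w j := fun j => by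
    have : (0 : ℝ) ≤ (μ ᵥ* M.map (↑)) j :=
      Finset.sum_nonneg fun k _ => mul_nonneg (hμ k) (Int.cast_nonneg (hM k j))
    rw [← hw, Function.comp_apply] at this
    exact_mod_cast this
  have hM' : ∀ k j, 0 ≤ M.updateRow i w k j := fun k j => by
    rw [updateRow_apply]
    split_ifs
    exacts [hw₀ j, hM k j]
  have ht'_pos : ∀ k, 0 < t' k := fun k =>
    (ht' k).lt_of_ne' ((linearIndependent_of_eq_vecMul hrank hc').ne_zero k)
  have := natAbs_det_mul_transpose_updateRow_lt
    (det_mul_transpose_ne_zero (linearIndependent_rows_of_eq_vecMul hrank hc)) hw (i := i)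
    (by rw [abs_of_nonneg (hμ i)]; exact hμ₁ i)
  exact exists_isTorsionFree_of_eq_vecMul hrank _ t' hM' ht'_pos hc'
termination_by (M * Mᵀ).det.natAbs

theorem exists_basis_sumElim_of_quotient {R M ι κ : Type*} [Ring R] [AddCommGroup M] [Module R M]
    {N : Submodule R M} {v : ι → M} (hv : LinearIndependent R v) (hvN : span R (range v) = N)
    (b : Basis κ R (M ⧸ N)) {w : κ → M} (hw : ∀ k, N.mkQ (w k) = b k) :
    ∃ B : Basis (ι ⊕ κ) R M, ⇑B = Sum.elim v w := by
  have hvN' : ∀ i, v i ∈ N := fun i => hvN ▸ subset_span (mem_range_self i)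
  have hwb : N.mkQ ∘ w = b := funext hw
  have hli : LinearIndependent R (Sum.elim v w) :=
    (LinearIndependent.of_comp N.subtype (v := fun i => (⟨v i, hvN' i⟩ : N)) hv
      ).sumElim_of_quotient w (hwb ▸ b.linearIndependent)
  have hsp : ⊤ ≤ span R (range (Sum.elim v w)) := by
    rw [Set.Sum.elim_range, span_union, hvN, top_le_iff, ← map_mkQ_eq_top, map_span, ← range_comp,
      hwb, b.span_eq]
  exact ⟨.mk hli hsp, Basis.coe_mk hli hsp⟩

theorem exists_nonneg_mkQ_eq [Fintype n] {N : Submodule ℤ (n → ℤ)} {u : n → ℤ} (hu : u ∈ N)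
    (hu_pos : ∀ j, 0 < u j) (q : (n → ℤ) ⧸ N) : ∃ x : n → ℤ, (∀ j, 0 ≤ x j) ∧ N.mkQ x = q := by
  obtain ⟨x, rfl⟩ := N.mkQ_surjective q
  refine ⟨x + (∑ j, |x j|) • u, fun j => ?_, ?_⟩
  · have hx : |x j| ≤ ∑ j, |x j| :=
      Finset.single_le_sum (fun k _ => abs_nonneg (x k)) (Finset.mem_univ j)
    have hS : 0 ≤ ∑ j, |x j| := (abs_nonneg _).trans hx
    simp only [Pi.add_apply, Pi.smul_apply, smul_eq_mul]
    nlinarith [neg_abs_le (x j), mul_le_mul_of_nonneg_left (hu_pos j : 1 ≤ u j) hS]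
  · rw [map_add, add_eq_left, mkQ_apply, Submodule.Quotient.mk_eq_zero]
    exact N.smul_mem _ hu

theorem sum_rows_pos [Fintype m] {c : n → ℝ} (hc : ∀ j, 0 < c j) {M : Matrix m n ℤ}
    (hM : ∀ i j, 0 ≤ M i j) {t : m → ℝ} (hct : c = t ᵥ* M.map (↑)) (j : n) : 0 < ∑ i, M i j := by
  refine (Finset.sum_nonneg fun i _ => hM i j).lt_of_ne fun h => (hc j).ne' ?_
  have hz : ∀ i, M i j = 0 := fun i =>
    (Finset.sum_eq_zero_iff_of_nonneg fun i _ => hM i j).mp h.symm i (Finset.mem_univ i)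
  simp [hct, vecMul, dotProduct, hz]

theorem exists_nonneg_basis_extending_rows [Fintype n] {M : Matrix m n ℤ} (hM : ∀ i j, 0 ≤ M i j)
    (hli : LinearIndependent ℤ M.row) [IsTorsionFree ℤ ((n → ℤ) ⧸ span ℤ (range M.row))]
    {u : n → ℤ} (hu : u ∈ span ℤ (range M.row)) (hu_pos : ∀ j, 0 < u j) :
    ∃ (k : ℕ) (b : Basis (m ⊕ Fin k) ℤ (n → ℤ)), (∀ i, b (.inl i) = M i) ∧ ∀ l j, 0 ≤ b l j := by
  let bQ := (Module.Free.chooseBasis ℤ ((n → ℤ) ⧸ span ℤ (range M.row))).reindex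
    (Fintype.equivFin _)
  choose w hw₀ hw using fun l => exists_nonneg_mkQ_eq hu hu_pos (bQ l)
  obtain ⟨b, hb⟩ := exists_basis_sumElim_of_quotient hli rfl bQ hw
  refine ⟨_, b, fun i => by rw [hb]; rfl, ?_⟩
  rintro (i | l) j
  · rw [hb]; exact hM i j
  · rw [hb]; exact hw₀ l j

theorem inv_map_mulVec_of_eq_mulVec [Fintype n] [DecidableEq n]
    {B : Matrix n n ℤ} (hB : IsUnit B.det) {c d : n → ℝ} (h : c = B.map (↑) *ᵥ d) :
    B⁻¹.map (↑) *ᵥ c = d := by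
  have hmap : B⁻¹.map ((↑) : ℤ → ℝ) * B.map (↑) = (B⁻¹ * B).map (↑) :=
    (Matrix.map_mul (f := Int.castRingHom ℝ)).symm
  rw [h, mulVec_mulVec, hmap, nonsing_inv_mul B hB]
  simp

theorem exists_isUnit_det_nonneg_eq_mulVec {r k : ℕ} {c : Fin (r + k) → ℝ} (hc : ∀ j, 0 < c j)
    {M : Matrix (Fin r) (Fin (r + k)) ℤ} (hM : ∀ i j, 0 ≤ M i j) {t : Fin r → ℝ}
    (ht : ∀ i, 0 < t i) (hct : c = t ᵥ* M.map (↑)) (hli : LinearIndependent ℤ M.row)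
    [IsTorsionFree ℤ ((Fin (r + k) → ℤ) ⧸ span ℤ (range M.row))] :
    ∃ (B : Matrix (Fin (r + k)) (Fin (r + k)) ℤ) (d : Fin (r + k) → ℝ), IsUnit B.det ∧
      (∀ i j, 0 ≤ B i j) ∧ c = B.map (↑) *ᵥ d ∧ (∀ i : Fin (r + k), (i : ℕ) < r → 0 < d i) ∧
      (∀ i : Fin (r + k), r ≤ (i : ℕ) → d i = 0) := by
  obtain ⟨k', b, hb_rows, hb_nonneg⟩ := exists_nonneg_basis_extending_rows hM hli
    (sum_mem fun i _ => subset_span (mem_range_self i) : ∑ i, M.row i ∈ _)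
    (fun j => by simpa using sum_rows_pos hc hM hct j)
  obtain rfl : k' = k := by
    simpa using Fintype.card_congr (b.indexEquiv (Pi.basisFun ℤ (Fin (r + k))))
  set b' := b.reindex finSumFinEquiv
  refine ⟨(Pi.basisFun ℤ _).toMatrix b', Fin.append t 0, ?_, fun i j => ?_, ?_, fun i hi => ?_,
    fun i hi => ?_⟩
  · rw [← Basis.det_apply]
    exact (Pi.basisFun ℤ _).isUnit_det b'
  · simpa [b', Basis.toMatrix_apply] using hb_nonneg _ i
  · ext j
    simp [mulVec, dotProduct, Fin.sum_univ_add, b', Basis.toMatrix_apply, hb_rows, hct, vecMul]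
    exact Finset.sum_congr rfl fun i _ => mul_comm _ _
  · cases i using Fin.addCases with
    | left i => simpa using ht i
    | right l => simp at hi
  · cases i using Fin.addCases with
    | left i => exact absurd hi (by simp)
    | right l => simp

open Matrix in
theorem perron_lemma_general (r s : ℕ) (hrs : r ≤ s) (c : Fin s → ℝ)
    (hpos : ∀ j, 0 < c j)
    (hindep : LinearIndependent ℚ (fun i : Fin r => c (Fin.castLE hrs i)))
    (hspan : ∀ j : Fin s,
      c j ∈ Submodule.span ℚ (Set.range (fun i : Fin r => c (Fin.castLE hrs i)))) :
    ∃ A : Matrix (Fin s) (Fin s) ℤ, IsUnit A.det ∧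
      (∀ i j, 0 ≤ A⁻¹ i j) ∧
      (∀ i : Fin s, (i : ℕ) < r → 0 < ∑ j, (A i j : ℝ) * c j) ∧
      (∀ i : Fin s, r ≤ (i : ℕ) → ∑ j, (A i j : ℝ) * c j = 0) := by
  obtain ⟨k, rfl⟩ := Nat.exists_eq_add_of_le hrs
  have : Module.Finite ℚ (span ℚ (range c)) := FiniteDimensional.span_of_finite ℚ (finite_range c)
  have hrank : Fintype.card (Fin r) ≤ finrank ℚ (span ℚ (range c)) :=
    finrank_span_eq_card hindep ▸ finrank_mono (span_mono (range_comp_subset_range _ c))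
  obtain ⟨D, B, hD, hcB⟩ := exists_eq_vecMul_of_mem_span hspan
  obtain ⟨M, t, hM, ht, hc⟩ :=
    exists_nonneg_eq_vecMul hpos (fun i => div_pos (hpos _) (Nat.cast_pos.mpr hD)) hcB
  obtain ⟨M, t, hM, ht, hc, htf⟩ := exists_isTorsionFree_of_eq_vecMul hrank M t hM ht hc
  obtain ⟨B, d, hB, hB_nonneg, hcd, hd_pos, hd_zero⟩ :=
    exists_isUnit_det_nonneg_eq_mulVec hpos hM ht hc (linearIndependent_rows_of_eq_vecMul hrank hc)
  have hd := inv_map_mulVec_of_eq_mulVec hB hcd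
  refine ⟨B⁻¹, isUnit_nonsing_inv_det B hB, by rwa [nonsing_inv_nonsing_inv B hB],
    fun i hi => ?_, fun i hi => ?_⟩
  · exact (hd_pos i hi).trans_eq (congrFun hd i).symm
  · exact (congrFun hd i).trans (hd_zero i hi)

open Matrix in
/-- **Perron-type lemma.**
Let `r ≤ s` be positive integers, and let `c₁, …, c_s` be positive real numbers such
that `c₁, …, c_r` form a basis of the `ℚ`-vector space spanned by `c₁, …, c_s`
(inside `ℝ` viewed as a `ℚ`-vector space).  Then there exists a matrix
`A ∈ GL_s(ℤ)` (an integer matrix with determinant a unit, i.e. `±1`) such that all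
entries of `A⁻¹` are nonnegative, `∑ j, A i j * c j > 0` for `i = 1, …, r`
(i.e. for indices `i` with `(i : ℕ) < r`), and `∑ j, A i j * c j = 0` for
`i = r+1, …, s`. -/
theorem perron_lemma (r s : ℕ) (hr : 0 < r) (hrs : r ≤ s) (c : Fin s → ℝ)
    (hpos : ∀ j, 0 < c j)
    (hindep : LinearIndependent ℚ (fun i : Fin r => c (Fin.castLE hrs i)))
    (hspan : ∀ j : Fin s,
      c j ∈ Submodule.span ℚ (Set.range (fun i : Fin r => c (Fin.castLE hrs i)))) :
    ∃ A : Matrix (Fin s) (Fin s) ℤ, IsUnit A.det ∧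
      (∀ i j, 0 ≤ A⁻¹ i j) ∧
      (∀ i : Fin s, (i : ℕ) < r → 0 < ∑ j, (A i j : ℝ) * c j) ∧
      (∀ i : Fin s, r ≤ (i : ℕ) → ∑ j, (A i j : ℝ) * c j = 0) :=
  perron_lemma_general r s hrs c hpos hindep hspan
end
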